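/- arXiv:2006.16318 — 7 statements merged into one kernel-verified Lean document; each statement's English description precedes it below -/
import Mathlib

section
/- Consider the ODE ẏ(t) = T(y(t)) − r*·e − y(t) on ℝ^{S×A}, where T is the Bellman optimality operator of a finite communicating MDP. If ȳ is an equilibrium point of this ODE (i.e., T(ȳ) = ȳ + r*·e), then along every solution y : [0,∞) → ℝ^{S×A} the function t ↦ ‖y(t) − ȳ‖_∞ is nonincreasing; moreover, every solution y(t) converges as t → ∞ to some equilibrium point y* of the ODE, where y* may depend on the initial condition y(0). -/
open Filter Topology Matrix

/-- A finite Markov decision process with finite state set `S`, finite action set `A`,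
finite reward set `R` (embedded in `ℝ` via `rval`), and transition dynamics `p`. -/
structure MDP (S A R : Type*) [Fintype S] [Fintype A] [Fintype R] where
  /-- `p s a s' r` is the probability of transitioning to `s'` with reward `r`
  when taking action `a` in state `s`. -/
  p : S → A → S → R → ℝ
  /-- The real value of each abstract reward. -/
  rval : R → ℝ
  p_nonneg : ∀ s a s' r, 0 ≤ p s a s' r
  p_sum_one : ∀ s a, ∑ s' : S, ∑ r : R, p s a s' r = 1

variable {S A R : Type*} [Fintype S] [Fintype A] [Fintype R] [DecidableEq S]

/-- A stationary Markov policy: a probability distribution over actions for each state. -/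
def IsPolicy (π : S → A → ℝ) : Prop :=
  (∀ s a, 0 ≤ π s a) ∧ ∀ s, ∑ a : A, π s a = 1

/-- Transition matrix of the Markov chain induced by policy `π`. -/
noncomputable def MDP.Pmat (M : MDP S A R) (π : S → A → ℝ) : Matrix S S ℝ :=
  Matrix.of fun s s' => ∑ a : A, ∑ r : R, π s a * M.p s a s' r

/-- Expected one-step reward under policy `π`. -/
noncomputable def MDP.rPi (M : MDP S A R) (π : S → A → ℝ) : S → ℝ :=
  fun s => ∑ a : A, ∑ s' : S, ∑ r : R, π s a * M.p s a s' r * M.rval r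

/-- The reward rate `r(π, s)`: the Cesàro limit of expected rewards starting from `s`,
where `E[R_t | S_0 = s] = (P_π^(t-1) r_π)(s)`. -/
noncomputable def MDP.rewardRate (M : MDP S A R) (π : S → A → ℝ) (s : S) : ℝ :=
  limUnder atTop (fun n : ℕ =>
    (1 / (n : ℝ)) * ∑ t ∈ Finset.range n, ((M.Pmat π ^ t) *ᵥ M.rPi π) s)

/-- The MDP is communicating: every state is reachable from every other state with
positive probability, in finitely many steps, under some policy. -/
def MDP.Communicating (M : MDP S A R) : Prop :=
  ∀ s s' : S, ∃ π : S → A → ℝ, IsPolicy π ∧ ∃ n : ℕ, 0 < n ∧ 0 < (M.Pmat π ^ n) s s'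

/-- The optimal reward rate `r* = sup_{π, s} r(π, s)`. -/
noncomputable def MDP.rStar (M : MDP S A R) : ℝ :=
  sSup {x : ℝ | ∃ π : S → A → ℝ, ∃ s : S, IsPolicy π ∧ x = M.rewardRate π s}

/-- The Bellman optimality operator `T(Q)(s,a) = Σ_{s',r} p(s',r|s,a) (r + max_{a'} Q(s',a'))`. -/
noncomputable def MDP.T [Nonempty A] (M : MDP S A R) (Q : S × A → ℝ) : S × A → ℝ :=
  fun sa => ∑ s' : S, ∑ r : R, M.p sa.1 sa.2 s' r * (M.rval r + ⨆ a' : A, Q (s', a'))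

/-- `Q` solves the average-reward Bellman optimality equation with offset `rbar`. -/
def MDP.BellmanOpt [Nonempty A] (M : MDP S A R) (Q : S × A → ℝ) (rbar : ℝ) : Prop :=
  ∀ s a, Q (s, a) = ∑ s' : S, ∑ r : R,
    M.p s a s' r * (M.rval r - rbar + ⨆ a' : A, Q (s', a'))

/-!
The relative Bellman operator `G x = T x - r*·e` satisfies `G x i - G x' i ≤ max_j (x j - x' j)`.
For two solutions `v`, `w` of `ẏ = G y - y`, Grönwall applied to `eᵗ (v - w + r)`, with `r` a
bound for `‖v - w‖_∞` on the time interval, shows that `max (v - w)`, and with it `‖v - w‖_∞`, is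
nonincreasing. Taking for `v` the time shift `y (· + h)`
of `y`, an `eᵗ`-weighted comparison on a coordinate where the maximum is attained shows that a
positive limit of `max (y (t + h) - y t)` would make `y` grow linearly along that coordinate,
against boundedness; so `y (t + h) - y t → 0` for every `h`. As `y` is Lipschitz this forces
`ẏ = G y - y → 0`, hence every cluster point `q` of the bounded trajectory is an equilibrium, and
since `‖y t - q‖` is nonincreasing, `y t → q`.
-/

open Set

variable {ι : Type*}

lemma iSup_le_pi_norm [Fintype ι] (x : ι → ℝ) : ⨆ i, x i ≤ ‖x‖ :=
  Real.iSup_le (fun i => (le_abs_self _).trans (norm_le_pi_norm x i)) (norm_nonneg _)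

lemma pi_norm_eq_max_iSup_iSup_neg [Fintype ι] (x : ι → ℝ) :
    ‖x‖ = max (⨆ i, x i) (⨆ i, -x i) := by
  refine le_antisymm ?_ (max_le (iSup_le_pi_norm x) (by simpa using iSup_le_pi_norm (-x)))
  rcases isEmpty_or_nonempty ι with _ | _
  · simp [Subsingleton.elim x 0]
  have hbdd : ∀ f : ι → ℝ, BddAbove (range f) := fun f => (finite_range f).bddAbove
  have hle : ∀ i, |x i| ≤ max (⨆ i, x i) (⨆ i, -x i) := fun i =>
    abs_le'.2 ⟨le_max_of_le_left (le_ciSup (hbdd _) i),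
      le_max_of_le_right (le_ciSup (hbdd fun i => -x i) i)⟩
  exact (pi_norm_le_iff_of_nonneg ((abs_nonneg _).trans (hle (Classical.arbitrary ι)))).2 hle

lemma pi_norm_add_const_eq [Fintype ι] [Nonempty ι] {x : ι → ℝ} {r : ℝ} (hx : ∀ i, -r ≤ x i) :
    ‖x + fun _ => r‖ = (⨆ i, x i) + r := by
  have hbdd : BddAbove (range x) := (finite_range x).bddAbove
  have hle : ∀ i, ‖(x + fun _ => r : ι → ℝ) i‖ ≤ (⨆ i, x i) + r := fun i => by
    rw [Pi.add_apply, Real.norm_of_nonneg (by linarith [hx i])]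
    linarith [le_ciSup hbdd i]
  refine le_antisymm ((pi_norm_le_iff_of_nonneg ((norm_nonneg _).trans
    (hle (Classical.arbitrary ι)))).2 hle) ?_
  refine le_sub_iff_add_le.1 (ciSup_le fun i => le_sub_iff_add_le.2 ?_)
  exact (le_abs_self _).trans (norm_le_pi_norm (x + fun _ => r : ι → ℝ) i)

lemma ciSup_sub_ciSup_le {α : Type*} [Finite α] [Nonempty α] (f g : α → ℝ) :
    (⨆ a, f a) - ⨆ a, g a ≤ ⨆ a, (f a - g a) :=
  sub_le_iff_le_add.2 <| ciSup_le fun a => by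
    linarith [le_ciSup (finite_range fun a => f a - g a).bddAbove a,
      le_ciSup (finite_range g).bddAbove a]

lemma norm_le_of_norm_deriv_add_le {E : Type*} [NormedAddCommGroup E] [NormedSpace ℝ E]
    {f f' : ℝ → E} {a b : ℝ} (hab : a ≤ b)
    (hf : ∀ t ∈ Icc a b, HasDerivWithinAt f (f' t) (Ici a) t)
    (hle : ∀ t ∈ Ico a b, ‖f' t + f t‖ ≤ ‖f t‖) : ‖f b‖ ≤ ‖f a‖ := by
  -- Grönwall with `K = 1` for `exp t • f t`, whose derivative is `exp t • (f' t + f t)`.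
  have hg : ∀ t ∈ Icc a b, HasDerivWithinAt (fun t => Real.exp t • f t)
      (Real.exp t • (f' t + f t)) (Ici a) t := fun t ht =>
    ((Real.hasDerivAt_exp t).hasDerivWithinAt.smul (hf t ht)).congr_deriv (smul_add _ _ _).symm
  have key := norm_le_gronwallBound_of_norm_deriv_right_le (K := 1) (ε := 0)
    (fun t ht => (hg t ht).continuousWithinAt.mono Icc_subset_Ici_self)
    (fun t ht => (hg t (Ico_subset_Icc_self ht)).mono (Ici_subset_Ici.2 ht.1)) le_rfl
    (fun t ht => by
      rw [norm_smul, norm_smul, one_mul, add_zero]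
      exact mul_le_mul_of_nonneg_left (hle t ht) (norm_nonneg _)) b ⟨hab, le_rfl⟩
  rw [gronwallBound_ε0, one_mul, norm_smul, norm_smul, Real.norm_of_nonneg (Real.exp_pos _).le,
    Real.norm_of_nonneg (Real.exp_pos _).le, mul_right_comm, ← Real.exp_add, add_sub_cancel] at key
  exact le_of_mul_le_mul_left key (Real.exp_pos b)

lemma antitoneOn_exp_mul_of_deriv_add_nonpos {f f' : ℝ → ℝ} {a : ℝ}
    (hf : ∀ t ∈ Ici a, HasDerivWithinAt f (f' t) (Ici a) t)
    (hle : ∀ t ∈ Ioi a, f' t + f t ≤ 0) : AntitoneOn (fun t => Real.exp t * f t) (Ici a) := by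
  refine antitoneOn_of_hasDerivWithinAt_nonpos (convex_Ici a)
    (fun t ht => (Real.continuous_exp.continuousWithinAt).mul (hf t ht).continuousWithinAt)
    (f' := fun t => Real.exp t * (f' t + f t)) (fun t ht => ?_) fun t ht => ?_
  · rw [interior_Ici] at ht ⊢
    exact ((Real.hasDerivAt_exp t).hasDerivWithinAt.mul
      ((hf t (Ioi_subset_Ici_self ht)).mono Ioi_subset_Ici_self)).congr_deriv (by ring)
  · rw [interior_Ici] at ht
    exact mul_nonpos_of_nonneg_of_nonpos (Real.exp_pos t).le (hle t ht)

lemma exists_forall_lt_add_of_bddBelow {f : ℝ → ℝ} {a : ℝ} (hf : BddBelow (f '' Ici a))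
    {δ : ℝ} (hδ : 0 < δ) : ∃ t₀ ≥ a, ∀ s ≥ a, f t₀ < f s + δ := by
  obtain ⟨_, ⟨t₀, ht₀, rfl⟩, hlt⟩ :=
    exists_lt_of_csInf_lt (nonempty_Ici.image f) (lt_add_of_pos_right _ hδ)
  exact ⟨t₀, ht₀, fun s hs => hlt.trans_le (add_le_add_left (csInf_le hf ⟨s, hs, rfl⟩) δ)⟩

lemma tendsto_of_mapClusterPt_of_antitoneOn_dist {X : Type*} [PseudoMetricSpace X]
    {y : ℝ → X} {q : X} {a : ℝ} (hanti : AntitoneOn (fun t => dist (y t) q) (Ici a))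
    (hq : MapClusterPt q atTop y) : Tendsto y atTop (𝓝 q) := by
  refine Metric.tendsto_atTop.2 fun ε hε => ?_
  obtain ⟨t₀, ht₀, hclose⟩ :=
    (hq.frequently (Metric.ball_mem_nhds q hε)).forall_exists_of_atTop a
  exact ⟨t₀, fun t ht => (hanti ht₀ (ht₀.trans ht) ht).trans_lt hclose⟩

lemma MapClusterPt.eq_of_tendsto {X α : Type*} [TopologicalSpace X] [T2Space X]
    {F : Filter α} {u : α → X} {x z : X} (hx : MapClusterPt x F u) (hu : Tendsto u F (𝓝 z)) :
    x = z := by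
  by_contra hne
  exact (ClusterPt.mono hx hu).neBot.ne (disjoint_nhds_nhds.2 hne).eq_bot

lemma sum_range_sub_shift (g : ℝ → ℝ) (t h : ℝ) (N : ℕ) :
    ∑ j ∈ Finset.range N, (g (t + j * h + h) - g (t + j * h)) = g (t + N * h) - g t := by
  have := Finset.sum_range_sub (fun j : ℕ => g (t + j * h)) N
  simp only [Nat.cast_succ, add_mul, one_mul, ← add_assoc, Nat.cast_zero, zero_mul,
    add_zero] at this
  exact this

def IsMaxNonexpansive (G : (ι → ℝ) → ι → ℝ) : Prop :=
  ∀ x x' i, G x i - G x' i ≤ ⨆ j, (x j - x' j)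

namespace IsMaxNonexpansive

variable {G : (ι → ℝ) → ι → ℝ}

lemma norm_sub_le [Fintype ι] (hG : IsMaxNonexpansive G) (x x' : ι → ℝ) :
    ‖G x - G x'‖ ≤ ‖x - x'‖ := by
  refine (pi_norm_le_iff_of_nonneg (norm_nonneg _)).2 fun i => abs_le.2 ⟨?_, ?_⟩
  · have := (hG x' x i).trans (iSup_le_pi_norm (x' - x))
    rw [norm_sub_rev] at this
    simp only [Pi.sub_apply]
    linarith
  · exact (hG x x' i).trans (iSup_le_pi_norm (x - x'))

lemma lipschitzWith [Fintype ι] (hG : IsMaxNonexpansive G) : LipschitzWith 1 G :=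
  LipschitzWith.of_dist_le_mul fun x x' => by
    simpa [dist_eq_norm] using hG.norm_sub_le x x'

lemma iSup_sub_le [Nonempty ι] (hG : IsMaxNonexpansive G) (x x' : ι → ℝ) :
    ⨆ i, (G x i - G x' i) ≤ ⨆ i, (x i - x' i) :=
  ciSup_le (hG x x')

lemma norm_sub_sub_sub_le [Fintype ι] (hG : IsMaxNonexpansive G) (x x' : ι → ℝ) :
    ‖(G x - x) - (G x' - x')‖ ≤ 2 * ‖x - x'‖ := by
  rw [sub_sub_sub_comm]
  linarith [_root_.norm_sub_le (G x - G x') (x - x'), hG.norm_sub_le x x']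

end IsMaxNonexpansive

section FixedPointFlow

variable [Fintype ι] {G : (ι → ℝ) → ι → ℝ}

def IsFixedPointFlow (G : (ι → ℝ) → ι → ℝ) (y : ℝ → ι → ℝ) : Prop :=
  ∀ t ∈ Ici (0 : ℝ), HasDerivWithinAt y (G (y t) - y t) (Ici 0) t

lemma isFixedPointFlow_const {q : ι → ℝ} (hq : G q = q) : IsFixedPointFlow G fun _ => q :=
  fun t _ => by simpa [hq] using hasDerivWithinAt_const t (Ici (0 : ℝ)) q

namespace IsFixedPointFlow

variable {y v w : ℝ → ι → ℝ}

lemma comp_add_const (hy : IsFixedPointFlow G y) {h : ℝ} (hh : 0 ≤ h) :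
    IsFixedPointFlow G fun t => y (t + h) := fun t ht => by
  have hmaps : MapsTo (fun s => s + h) (Ici 0) (Ici 0) := fun s hs =>
    add_nonneg (mem_Ici.1 hs) hh
  exact ((hy (t + h) (hmaps ht)).scomp t
    ((hasDerivAt_id t).add_const h).hasDerivWithinAt hmaps).congr_deriv (one_smul ℝ _)

lemma continuousOn (hy : IsFixedPointFlow G y) : ContinuousOn y (Ici 0) :=
  fun t ht => (hy t ht).continuousWithinAt

lemma hasDerivWithinAt_sub (hv : IsFixedPointFlow G v) (hw : IsFixedPointFlow G w) {t : ℝ}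
    (ht : t ∈ Ici 0) : HasDerivWithinAt (fun t => v t - w t)
      ((G (v t) - G (w t)) - (v t - w t)) (Ici 0) t :=
  ((hv t ht).sub (hw t ht)).congr_deriv (by abel)

lemma antitoneOn_iSup_sub (hG : IsMaxNonexpansive G) (hv : IsFixedPointFlow G v)
    (hw : IsFixedPointFlow G w) : AntitoneOn (fun t => ⨆ i, (v t i - w t i)) (Ici 0) := by
  rcases isEmpty_or_nonempty ι with _ | _
  · intro _ _ _ _ _
    simp
  intro t₁ ht₁ t₂ _ h12
  have hsub : Icc t₁ t₂ ⊆ Ici 0 := fun t ht => le_trans ht₁ ht.1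
  -- on `[t₁, t₂]`, shifting by a bound `r` of `‖v - w‖` turns the sup norm into `⨆ (v - w) + r`
  obtain ⟨r, hr⟩ := isCompact_Icc.exists_bound_of_continuousOn
    ((hv.continuousOn.sub hw.continuousOn).mono hsub)
  have hlow : ∀ t ∈ Icc t₁ t₂, ∀ i, -r ≤ v t i - w t i := fun t ht i =>
    neg_le_of_abs_le ((norm_le_pi_norm (v t - w t) i).trans (hr t ht))
  have key := norm_le_of_norm_deriv_add_le h12 (f := fun t => (v t - w t) + fun _ => r)
    (fun t ht => ((hasDerivWithinAt_sub hv hw (hsub ht)).add_const _).mono (Ici_subset_Ici.2 ht₁))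
    (fun t ht => by
      have ht' := Ico_subset_Icc_self ht
      have hGlow : ∀ i, -r ≤ G (v t) i - G (w t) i := fun i => neg_le_of_abs_le
        (((norm_le_pi_norm (G (v t) - G (w t)) i).trans (hG.norm_sub_le _ _)).trans (hr t ht'))
      rw [show (G (v t) - G (w t)) - (v t - w t) + ((v t - w t) + fun _ => r)
          = (G (v t) - G (w t)) + fun _ => r by abel,
        pi_norm_add_const_eq (x := G (v t) - G (w t)) hGlow,
        pi_norm_add_const_eq (x := v t - w t) (hlow t ht')]
      exact add_le_add_left (hG.iSup_sub_le (v t) (w t)) r)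
  rw [pi_norm_add_const_eq (x := v t₂ - w t₂) (hlow _ ⟨h12, le_rfl⟩),
    pi_norm_add_const_eq (x := v t₁ - w t₁) (hlow _ ⟨le_rfl, h12⟩)]
    at key
  exact le_of_add_le_add_right key

lemma antitoneOn_norm_sub (hG : IsMaxNonexpansive G) (hv : IsFixedPointFlow G v)
    (hw : IsFixedPointFlow G w) : AntitoneOn (fun t => ‖v t - w t‖) (Ici 0) := by
  intro t₁ ht₁ t₂ ht₂ h12
  simp only [pi_norm_eq_max_iSup_iSup_neg, Pi.sub_apply, neg_sub]
  exact max_le_max (antitoneOn_iSup_sub hG hv hw ht₁ ht₂ h12)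
    (antitoneOn_iSup_sub hG hw hv ht₁ ht₂ h12)

lemma le_sub_apply_of_iSup_le (hG : IsMaxNonexpansive G) (hv : IsFixedPointFlow G v)
    (hw : IsFixedPointFlow G w) (i : ι) {t₀ c σ s : ℝ} (ht₀ : 0 ≤ t₀)
    (hc : ∀ t ≥ t₀, ⨆ j, (v t j - w t j) ≤ c) (hσ : t₀ ≤ σ) (hσs : σ ≤ s) :
    c - Real.exp (s - σ) * (c - (v s i - w s i)) ≤ v σ i - w σ i := by
  have hsub : Ici t₀ ⊆ Ici 0 := Ici_subset_Ici.2 ht₀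
  have hanti := antitoneOn_exp_mul_of_deriv_add_nonpos (a := t₀) (f := fun t => v t i - w t i - c)
    (fun t ht => (((hasDerivWithinAt_pi.1 (hasDerivWithinAt_sub hv hw (hsub ht))) i).sub_const
      c).mono hsub)
    (fun t ht => by
      have := (hG (v t) (w t) i).trans (hc t (le_of_lt ht))
      simp only [Pi.sub_apply]
      linarith)
    hσ (hσ.trans hσs) hσs
  have hexp : Real.exp σ * Real.exp (s - σ) = Real.exp s := by
    rw [← Real.exp_add, add_sub_cancel]
  have hscaled : Real.exp σ * (Real.exp (s - σ) * (v s i - w s i - c))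
      ≤ Real.exp σ * (v σ i - w σ i - c) := by
    rw [← mul_assoc, hexp]
    exact hanti
  linarith [le_of_mul_le_mul_left hscaled (Real.exp_pos σ)]

lemma exists_iSup_sub_le (hG : IsMaxNonexpansive G) (hv : IsFixedPointFlow G v)
    (hw : IsFixedPointFlow G w) {h B : ℝ} (hh : 0 ≤ h)
    (hsum : ∀ t ≥ 0, ∀ (N : ℕ) (i : ι),
      ∑ j ∈ Finset.range N, (v (t + j * h) i - w (t + j * h) i) ≤ B)
    {ε : ℝ} (hε : 0 < ε) : ∃ T ≥ 0, ⨆ i, (v T i - w T i) ≤ ε := by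
  rcases isEmpty_or_nonempty ι with _ | _
  · exact ⟨0, le_rfl, by simp [hε.le]⟩
  set m := fun t => ⨆ i, (v t i - w t i)
  have hanti : AntitoneOn m (Ici 0) := antitoneOn_iSup_sub hG hv hw
  by_contra! hbig
  -- Once `m` is within `δ` of its limit, the coordinate `i` maximal at `s = t₀ + N * h` stays
  -- `≥ ε / 2` on `[t₀, s]`, so the sum in `hsum` exceeds `N * ε / 2 > B`.
  obtain ⟨N, hN⟩ := exists_nat_gt (2 * B / ε)
  set δ := ε / 2 / Real.exp (N * h)
  obtain ⟨t₀, ht₀, hflat⟩ := exists_forall_lt_add_of_bddBelow (f := m) (a := 0)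
    ⟨ε, by rintro _ ⟨t, ht, rfl⟩; exact (hbig t ht).le⟩ (by positivity : 0 < δ)
  set s := t₀ + N * h
  have hs : 0 ≤ s := by positivity
  obtain ⟨i, hi⟩ := Finite.exists_max fun j => v s j - w s j
  have hms : m s = v s i - w s i :=
    le_antisymm (ciSup_le hi) (le_ciSup (finite_range fun j => v s j - w s j).bddAbove i)
  have hterm : ∀ j ∈ Finset.range N, ε / 2 ≤ v (t₀ + j * h) i - w (t₀ + j * h) i := by
    intro j hj
    have hjh : 0 ≤ (j : ℝ) * h := by positivity
    have hjN : (j : ℝ) * h ≤ N * h := mul_le_mul_of_nonneg_right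
      (by exact_mod_cast (Finset.mem_range.1 hj).le) hh
    have hlow := le_sub_apply_of_iSup_le hG hv hw i ht₀
      (fun t ht => hanti ht₀ (ht₀.trans ht) ht) (le_add_of_nonneg_right hjh)
      (add_le_add_right hjN t₀)
    have hgap : Real.exp (s - (t₀ + j * h)) * (m t₀ - (v s i - w s i)) ≤ Real.exp (N * h) * δ :=
      mul_le_mul (Real.exp_le_exp.2 (by linarith)) (by linarith [hflat s hs])
        (by linarith [hanti ht₀ hs (le_add_of_nonneg_right (by positivity))]) (by positivity)
    have hδ : Real.exp (N * h) * δ = ε / 2 := mul_div_cancel₀ _ (Real.exp_pos _).ne'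
    linarith [hbig t₀ ht₀]
  have hlower := Finset.card_nsmul_le_sum _ _ _ hterm
  rw [Finset.card_range, nsmul_eq_mul] at hlower
  rw [div_lt_iff₀ hε] at hN
  linarith [hsum t₀ ht₀ N i]

lemma eventually_iSup_sub_le (hG : IsMaxNonexpansive G) (hv : IsFixedPointFlow G v)
    (hw : IsFixedPointFlow G w) {h B : ℝ} (hh : 0 ≤ h)
    (hsum : ∀ t ≥ 0, ∀ (N : ℕ) (i : ι),
      ∑ j ∈ Finset.range N, (v (t + j * h) i - w (t + j * h) i) ≤ B)
    {ε : ℝ} (hε : 0 < ε) : ∀ᶠ t in atTop, ⨆ i, (v t i - w t i) ≤ ε := by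
  obtain ⟨T, hT0, hT⟩ := exists_iSup_sub_le hG hv hw hh hsum hε
  exact eventually_atTop.2 ⟨T, fun t ht =>
    (antitoneOn_iSup_sub hG hv hw hT0 (hT0.trans ht) ht).trans hT⟩

lemma eventually_norm_comp_add_sub_le (hG : IsMaxNonexpansive G) (hy : IsFixedPointFlow G y)
    {B : ℝ} (hB : ∀ t ≥ 0, ‖y t‖ ≤ B) {h : ℝ} (hh : 0 ≤ h) {ε : ℝ} (hε : 0 < ε) :
    ∀ᶠ t in atTop, ‖y (t + h) - y t‖ ≤ ε := by
  have hy' := hy.comp_add_const hh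
  have hcoord : ∀ t ≥ 0, ∀ s ≥ 0, ∀ i, y s i - y t i ≤ 2 * B := fun t ht s hs i => by
    have h1 : y s i - y t i ≤ ‖y s - y t‖ := (le_abs_self _).trans (norm_le_pi_norm (y s - y t) i)
    linarith [norm_sub_le (y s) (y t), hB s hs, hB t ht]
  have hfwd := eventually_iSup_sub_le hG hy' hy hh (B := 2 * B) (fun t ht N i => by
    rw [sum_range_sub_shift (fun s => y s i)]
    exact hcoord t ht _ (by positivity) i) hε
  have hbwd := eventually_iSup_sub_le hG hy hy' hh (B := 2 * B) (fun t ht N i => by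
    rw [← neg_le_neg_iff, ← Finset.sum_neg_distrib]
    simp only [neg_sub]
    rw [sum_range_sub_shift (fun s => y s i)]
    linarith [hcoord _ (by positivity : 0 ≤ t + N * h) t ht i]) hε
  filter_upwards [hfwd, hbwd] with t h₁ h₂
  rw [pi_norm_eq_max_iSup_iSup_neg]
  simpa only [Pi.sub_apply, neg_sub] using max_le h₁ h₂

lemma norm_sub_le_mul {C : ℝ} (hy : IsFixedPointFlow G y) (hC : ∀ t ≥ 0, ‖G (y t) - y t‖ ≤ C)
    {t s : ℝ} (ht : 0 ≤ t) (hts : t ≤ s) : ‖y s - y t‖ ≤ C * (s - t) :=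
  norm_image_sub_le_of_norm_deriv_le_segment'
    (fun r hr => (hy r (ht.trans hr.1)).mono fun _ hr' => ht.trans hr'.1)
    (fun r hr => hC r (ht.trans hr.1)) s ⟨hts, le_rfl⟩

lemma norm_smul_sub_le (hG : IsMaxNonexpansive G) (hy : IsFixedPointFlow G y) {C : ℝ}
    (hC : ∀ t ≥ 0, ‖G (y t) - y t‖ ≤ C) {t h : ℝ} (ht : 0 ≤ t) (hh : 0 ≤ h) :
    ‖h • (G (y t) - y t)‖ ≤ ‖y (t + h) - y t‖ + 2 * C * h ^ 2 := by
  set F := fun x => G x - x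
  set g := fun s => y s - (s - t) • F (y t)
  have hg : ∀ s ∈ Icc t (t + h), HasDerivWithinAt g (F (y s) - F (y t)) (Icc t (t + h)) s :=
    fun s hs => ((hy s (ht.trans hs.1)).mono fun r hr => ht.trans hr.1).sub
      ((((hasDerivAt_id s).sub_const t).smul_const (F (y t))).hasDerivWithinAt.congr_deriv
        (one_smul ℝ _))
  have hg' : ∀ s ∈ Ico t (t + h), ‖F (y s) - F (y t)‖ ≤ 2 * C * h := fun s hs => calc
    ‖F (y s) - F (y t)‖ ≤ 2 * ‖y s - y t‖ := hG.norm_sub_sub_sub_le _ _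
    _ ≤ 2 * (C * (s - t)) := by gcongr; exact norm_sub_le_mul hy hC ht hs.1
    _ ≤ 2 * C * h := by
      have : 0 ≤ C := (norm_nonneg _).trans (hC 0 le_rfl)
      nlinarith [hs.2]
  have key := norm_image_sub_le_of_norm_deriv_le_segment' hg hg' (t + h) ⟨by linarith, le_rfl⟩
  calc ‖h • F (y t)‖ = ‖(y (t + h) - y t) - (g (t + h) - g t)‖ := by
        simp only [g, sub_self, zero_smul, add_sub_cancel_left]
        abel_nf
    _ ≤ ‖y (t + h) - y t‖ + ‖g (t + h) - g t‖ := norm_sub_le _ _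
    _ ≤ ‖y (t + h) - y t‖ + 2 * C * h ^ 2 := by
        rw [add_sub_cancel_left] at key
        nlinarith [key]

lemma tendsto_sub_zero (hG : IsMaxNonexpansive G) (hy : IsFixedPointFlow G y) {C : ℝ}
    (hC : ∀ t ≥ 0, ‖G (y t) - y t‖ ≤ C)
    (hshift : ∀ h ≥ 0, ∀ ε > 0, ∀ᶠ t in atTop, ‖y (t + h) - y t‖ ≤ ε) :
    Tendsto (fun t => G (y t) - y t) atTop (𝓝 0) := by
  refine Metric.tendsto_nhds.2 fun ε hε => ?_
  have hC0 : 0 ≤ C := (norm_nonneg _).trans (hC 0 le_rfl)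
  set h := ε / (8 * C + 1)
  have hh : 0 < h := by positivity
  have hCh : 2 * C * h ≤ ε / 4 := by
    rw [mul_div_assoc', div_le_div_iff₀ (by positivity) (by norm_num)]
    nlinarith
  filter_upwards [hshift h hh.le (h * ε / 2) (by positivity), eventually_ge_atTop 0]
    with t hsmall ht
  have key := norm_smul_sub_le hG hy hC ht hh.le
  rw [norm_smul, Real.norm_of_nonneg hh.le] at key
  rw [dist_zero_right]
  nlinarith

theorem exists_fixedPoint_tendsto (hG : IsMaxNonexpansive G) (hy : IsFixedPointFlow G y)
    {ybar : ι → ℝ} (hbar : G ybar = ybar) : ∃ q, G q = q ∧ Tendsto y atTop (𝓝 q) := by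
  set B := ‖y 0 - ybar‖
  have hdist : ∀ t ≥ 0, ‖y t - ybar‖ ≤ B := fun t ht =>
    hy.antitoneOn_norm_sub hG (isFixedPointFlow_const hbar) self_mem_Ici ht ht
  have hbdd : ∀ t ≥ 0, ‖y t‖ ≤ B + ‖ybar‖ := fun t ht => by
    linarith [norm_le_insert' (y t) ybar, hdist t ht]
  have hvf : ∀ t ≥ 0, ‖G (y t) - y t‖ ≤ 2 * B := fun t ht => by
    have := hG.norm_sub_sub_sub_le (y t) ybar
    rw [hbar, sub_self, sub_zero] at this
    linarith [hdist t ht]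
  have hlim := hy.tendsto_sub_zero hG hvf fun h hh ε hε =>
    hy.eventually_norm_comp_add_sub_le hG hbdd hh hε
  obtain ⟨q, -, hq⟩ := (isCompact_closedBall ybar B).exists_mapClusterPt (f := atTop) (u := y)
    (tendsto_principal.2 ((eventually_ge_atTop 0).mono fun t ht =>
      mem_closedBall_iff_norm.2 (hdist t ht)))
  have hfix : G q - q = 0 :=
    (hq.tendsto_comp ((hG.lipschitzWith.continuous.sub continuous_id).tendsto q)).eq_of_tendsto
      hlim
  refine ⟨q, sub_eq_zero.1 hfix, tendsto_of_mapClusterPt_of_antitoneOn_dist (a := 0) ?_ hq⟩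
  simpa only [dist_eq_norm] using hy.antitoneOn_norm_sub hG (isFixedPointFlow_const
    (sub_eq_zero.1 hfix))

end IsFixedPointFlow

end FixedPointFlow

omit [DecidableEq S] in
lemma MDP.T_sub_T_le [Nonempty A] (M : MDP S A R) (x x' : S × A → ℝ) (sa : S × A) :
    M.T x sa - M.T x' sa ≤ ⨆ j, (x j - x' j) := by
  set m := ⨆ j, (x j - x' j)
  have hmax : ∀ s', (⨆ a, x (s', a)) - ⨆ a, x' (s', a) ≤ m := fun s' =>
    (ciSup_sub_ciSup_le _ _).trans
      (ciSup_le fun a => le_ciSup (finite_range fun j => x j - x' j).bddAbove (s', a))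
  calc M.T x sa - M.T x' sa
      = ∑ s', ∑ r, M.p sa.1 sa.2 s' r * ((⨆ a, x (s', a)) - ⨆ a, x' (s', a)) := by
        simp only [MDP.T, ← Finset.sum_sub_distrib, ← mul_sub, add_sub_add_left_eq_sub]
    _ ≤ ∑ s', ∑ r, M.p sa.1 sa.2 s' r * m := by
        gcongr with s' _ r _
        · exact M.p_nonneg _ _ _ _
        · exact hmax s'
    _ = m := by simp only [← Finset.sum_mul, M.p_sum_one, one_mul]

omit [DecidableEq S] in
lemma MDP.isMaxNonexpansive_T_sub_const [Nonempty A] (M : MDP S A R) (c : ℝ) :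
    IsMaxNonexpansive fun x => M.T x - c • fun _ : S × A => (1 : ℝ) := fun x x' sa => by
  simpa only [Pi.sub_apply, sub_sub_sub_cancel_right] using M.T_sub_T_le x x' sa

theorem ode_sup_norm_nonincreasing_and_converges_general [Nonempty A]
    (M : MDP S A R)
    (ybar : S × A → ℝ) (hybar : M.T ybar = ybar + M.rStar • (fun _ => (1 : ℝ)))
    (y : ℝ → (S × A → ℝ))
    (hy : ∀ t ∈ Set.Ici (0 : ℝ),
      HasDerivWithinAt y (M.T (y t) - M.rStar • (fun _ => (1 : ℝ)) - y t) (Set.Ici 0) t) :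
    AntitoneOn (fun t => ‖y t - ybar‖) (Set.Ici 0) ∧
    ∃ ystar : S × A → ℝ, M.T ystar = ystar + M.rStar • (fun _ => (1 : ℝ)) ∧
      Tendsto y atTop (𝓝 ystar) := by
  have hG := M.isMaxNonexpansive_T_sub_const M.rStar
  have hflow : IsFixedPointFlow (fun x => M.T x - M.rStar • fun _ => (1 : ℝ)) y := hy
  have hbar : M.T ybar - M.rStar • (fun _ => (1 : ℝ)) = ybar := sub_eq_of_eq_add hybar
  obtain ⟨ystar, hstar, hlim⟩ := hflow.exists_fixedPoint_tendsto hG hbar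
  exact ⟨hflow.antitoneOn_norm_sub hG (isFixedPointFlow_const hbar), ystar,
    eq_add_of_sub_eq hstar, hlim⟩

/-- For the ODE `ẏ = T(y) − r*·e − y`: if `ȳ` is an equilibrium, then along
every solution `y` on `[0,∞)` the map `t ↦ ‖y t − ȳ‖_∞` is nonincreasing, and every solution
converges to some equilibrium point `y*` (possibly depending on `y 0`). -/
theorem ode_sup_norm_nonincreasing_and_converges [Nonempty A]
    (M : MDP S A R) (hcomm : M.Communicating)
    (ybar : S × A → ℝ) (hybar : M.T ybar = ybar + M.rStar • (fun _ => (1 : ℝ)))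
    (y : ℝ → (S × A → ℝ))
    (hy : ∀ t ∈ Set.Ici (0 : ℝ),
      HasDerivWithinAt y (M.T (y t) - M.rStar • (fun _ => (1 : ℝ)) - y t) (Set.Ici 0) t) :
    AntitoneOn (fun t => ‖y t - ybar‖) (Set.Ici 0) ∧
    ∃ ystar : S × A → ℝ, M.T ystar = ystar + M.rStar • (fun _ => (1 : ℝ)) ∧
      Tendsto y atTop (𝓝 ystar) :=
  ode_sup_norm_nonincreasing_and_converges_general M ybar hybar y hy
end

section
/- Let f : ℝ^{S×A} → ℝ be an admissible reference function with parameters (L, u), let T be the Bellman optimality operator of a finite communicating MDP, and let y : [0,∞) → ℝ^{S×A} solve ẏ = T(y) − r*·e − y and x : [0,∞) → ℝ^{S×A} solve ẋ = T(x) − f(x)·e − x with x(0) = y(0). Then there exists a differentiable function z : [0,∞) → ℝ with z(0) = 0 such that x(t) = y(t) + z(t)·e for all t ≥ 0 and z satisfies the scalar ODE ż(t) = −u·z(t) + (r* − f(y(t))). -/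
open Filter Topology Matrix

variable {S A R : Type*} [Fintype S] [Fintype A] [Fintype R] [DecidableEq S]

/-- A reference function `f : ℝ^{S×A} → ℝ` admissible with parameters `(L, u)`:
`L`-Lipschitz w.r.t. the sup norm, `f(e) = u`, `f(x + c·e) = f(x) + c·u`, and
`f(c·x) = c·f(x)`. -/
def AdmissibleRef (f : (S × A → ℝ) → ℝ) (L u : ℝ) : Prop :=
  0 ≤ L ∧ 0 < u ∧ LipschitzWith L.toNNReal f ∧
    f (fun _ => 1) = u ∧
    (∀ (x : S × A → ℝ) (c : ℝ), f (x + fun _ => c) = f x + c * u) ∧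
    (∀ (x : S × A → ℝ) (c : ℝ), f (c • x) = c * f x)

/-!
The Bellman operator commutes with constant shifts, `T (Q + c·e) = T Q + c·e`, and so does an
admissible `f` up to the factor `u`. Hence, if `z` solves the scalar linear equation
`ż = -u z + (r* - f(y))` with `z 0 = 0`, then `y + z·e` solves the equation of `x` with the same
initial value. Since `T` is nonexpansive in the sup norm and `f` is Lipschitz, that equation has
unique solutions, so `x = y + z·e`.
-/

open Set

lemma abs_ciSup_sub_ciSup_le_dist {ι : Type*} [Fintype ι] [Nonempty ι] (P P' : ι → ℝ) :
    |(⨆ i, P i) - ⨆ i, P' i| ≤ dist P P' := by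
  have key : ∀ P P' : ι → ℝ, (⨆ i, P i) - ⨆ i, P' i ≤ dist P P' := fun P P' =>
    sub_le_iff_le_add.2 <| ciSup_le fun i => by
      have hi : P i - P' i ≤ dist P P' :=
        (le_abs_self _).trans ((Real.dist_eq _ _).symm.trans_le (dist_le_pi_dist P P' i))
      linarith [le_ciSup (finite_range P').bddAbove i]
  exact abs_sub_le_iff.2 ⟨key P P', dist_comm P P' ▸ key P' P⟩

lemma abs_sum_mul_le_of_sum_eq_one {ι : Type*} (s : Finset ι) {w v : ι → ℝ} {c : ℝ}
    (hw : ∀ i ∈ s, 0 ≤ w i) (hw_sum : ∑ i ∈ s, w i = 1) (hv : ∀ i ∈ s, |v i| ≤ c) :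
    |∑ i ∈ s, w i * v i| ≤ c :=
  calc |∑ i ∈ s, w i * v i| ≤ ∑ i ∈ s, w i * |v i| := by
        refine (Finset.abs_sum_le_sum_abs _ _).trans_eq (Finset.sum_congr rfl fun i hi => ?_)
        rw [abs_mul, abs_of_nonneg (hw i hi)]
    _ ≤ ∑ i ∈ s, w i * c :=
        Finset.sum_le_sum fun i hi => mul_le_mul_of_nonneg_left (hv i hi) (hw i hi)
    _ = c := by rw [← Finset.sum_mul, hw_sum, one_mul]

theorem ODE_solution_unique_of_mem_Ici {E : Type*} [NormedAddCommGroup E] [NormedSpace ℝ E]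
    {v : ℝ → E → E} {K : NNReal} (hv : ∀ t, LipschitzWith K (v t)) {f g : ℝ → E} {a : ℝ}
    (hf : ∀ t ∈ Ici a, HasDerivWithinAt f (v t (f t)) (Ici a) t)
    (hg : ∀ t ∈ Ici a, HasDerivWithinAt g (v t (g t)) (Ici a) t) (ha : f a = g a) :
    EqOn f g (Ici a) := fun _ hb =>
  ODE_solution_unique hv
    (fun t ht => (hf t ht.1).continuousWithinAt.mono Icc_subset_Ici_self)
    (fun t ht => (hf t ht.1).mono (Ici_subset_Ici.2 ht.1))
    (fun t ht => (hg t ht.1).continuousWithinAt.mono Icc_subset_Ici_self)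
    (fun t ht => (hg t ht.1).mono (Ici_subset_Ici.2 ht.1)) ha ⟨hb, le_rfl⟩

/-- Variation of constants for `ż = a z + g`. -/
lemma hasDerivAt_exp_mul_integral (a : ℝ) {g : ℝ → ℝ} (hg : Continuous g) (t : ℝ) :
    HasDerivAt (fun t => Real.exp (a * t) * ∫ s in (0 : ℝ)..t, Real.exp (-(a * s)) * g s)
      (a * (Real.exp (a * t) * ∫ s in (0 : ℝ)..t, Real.exp (-(a * s)) * g s) + g t) t := by
  have hexp : HasDerivAt (fun t => Real.exp (a * t)) (Real.exp (a * t) * a) t := by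
    simpa using ((hasDerivAt_id t).const_mul a).exp
  have hcont : Continuous fun s => Real.exp (-(a * s)) * g s := by fun_prop
  refine (hexp.mul (hcont.integral_hasStrictDerivAt 0 t).hasDerivAt).congr_deriv ?_
  have hinv : Real.exp (a * t) * Real.exp (-(a * t)) = 1 := by rw [← Real.exp_add]; simp
  linear_combination g t * hinv

lemma exists_hasDerivWithinAt_linear_ode_Ici (a : ℝ) {g : ℝ → ℝ} (hg : ContinuousOn g (Ici 0)) :
    ∃ z : ℝ → ℝ, z 0 = 0 ∧ ∀ t ∈ Ici (0 : ℝ), HasDerivWithinAt z (a * z t + g t) (Ici 0) t := by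
  have hg' : Continuous fun s => g (max s 0) :=
    hg.comp_continuous (continuous_id.max continuous_const) fun s => le_max_right s 0
  refine ⟨fun t => Real.exp (a * t) * ∫ s in (0 : ℝ)..t, Real.exp (-(a * s)) * g (max s 0),
    by simp, fun t ht => ?_⟩
  have := (hasDerivAt_exp_mul_integral a hg' t).hasDerivWithinAt (s := Ici 0)
  rwa [max_eq_left (mem_Ici.1 ht)] at this

namespace MDP

omit [DecidableEq S]

variable [Nonempty A] (M : MDP S A R)

lemma T_add_const (Q : S × A → ℝ) (c : ℝ) :
    M.T (Q + fun _ => c) = M.T Q + fun _ => c := by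
  funext sa
  have hsup (s' : S) : (⨆ a', (Q (s', a') + c)) = (⨆ a', Q (s', a')) + c :=
    (ciSup_add (finite_range _).bddAbove c).symm
  simp only [T, Pi.add_apply, hsup, ← add_assoc, mul_add, Finset.sum_add_distrib,
    ← Finset.sum_mul, M.p_sum_one, one_mul]

lemma lipschitzWith_T : LipschitzWith 1 M.T := by
  refine LipschitzWith.of_dist_le_mul fun Q Q' => ?_
  rw [NNReal.coe_one, one_mul]
  refine (dist_pi_le_iff dist_nonneg).2 fun sa => ?_
  have hsup (s' : S) : |(⨆ a', Q (s', a')) - ⨆ a', Q' (s', a')| ≤ dist Q Q' :=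
    (abs_ciSup_sub_ciSup_le_dist _ _).trans <|
      (dist_pi_le_iff dist_nonneg).2 fun a' => dist_le_pi_dist Q Q' (s', a')
  rw [Real.dist_eq]
  simp only [T, ← Finset.sum_sub_distrib, ← mul_sub, add_sub_add_left_eq_sub]
  rw [← Fintype.sum_prod_type']
  refine abs_sum_mul_le_of_sum_eq_one _ (fun _ _ => M.p_nonneg _ _ _ _) ?_ fun i _ => hsup i.1
  rw [Fintype.sum_prod_type']
  exact M.p_sum_one _ _

end MDP

theorem ode_difference_is_constant_vector_general [Nonempty A]
    (M : MDP S A R)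
    {L u : ℝ} (f : (S × A → ℝ) → ℝ) (hf : AdmissibleRef f L u)
    (y x : ℝ → (S × A → ℝ))
    (hy : ∀ t ∈ Set.Ici (0 : ℝ),
      HasDerivWithinAt y (M.T (y t) - M.rStar • (fun _ => (1 : ℝ)) - y t) (Set.Ici 0) t)
    (hx : ∀ t ∈ Set.Ici (0 : ℝ),
      HasDerivWithinAt x (M.T (x t) - f (x t) • (fun _ => (1 : ℝ)) - x t) (Set.Ici 0) t)
    (h0 : x 0 = y 0) :
    ∃ z : ℝ → ℝ, z 0 = 0 ∧
      (∀ t ∈ Set.Ici (0 : ℝ), x t = y t + z t • (fun _ => (1 : ℝ))) ∧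
      ∀ t ∈ Set.Ici (0 : ℝ),
        HasDerivWithinAt z (-u * z t + (M.rStar - f (y t))) (Set.Ici 0) t := by
  obtain ⟨-, -, hlip, -, hshift, -⟩ := hf
  set e : S × A → ℝ := fun _ => 1
  have hconst (c : ℝ) : c • e = fun _ => c := by ext; simp [e]
  have hyc : ContinuousOn y (Ici 0) := fun t ht => (hy t ht).continuousWithinAt
  obtain ⟨z, hz0, hz⟩ := exists_hasDerivWithinAt_linear_ode_Ici (-u)
    (g := fun t => M.rStar - f (y t))
    (continuousOn_const.sub (hlip.continuous.comp_continuousOn hyc))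
  have hw : ∀ t ∈ Ici (0 : ℝ), HasDerivWithinAt (fun t => y t + z t • e)
      (M.T (y t + z t • e) - f (y t + z t • e) • e - (y t + z t • e)) (Ici 0) t := by
    intro t ht
    refine ((hy t ht).add ((hz t ht).smul_const e)).congr_deriv ?_
    simp only [hconst, M.T_add_const, hshift]
    ext
    simp only [neg_mul, Pi.add_apply, Pi.sub_apply]
    ring
  have hv : LipschitzWith _ fun Q => M.T Q - f Q • e - Q :=
    (M.lipschitzWith_T.sub ((ContinuousLinearMap.toSpanSingleton ℝ e).lipschitz.comp hlip)).sub
      LipschitzWith.id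
  have hxw := ODE_solution_unique_of_mem_Ici (fun _ => hv) hx hw
    (by rw [h0, hz0, zero_smul, add_zero])
  exact ⟨z, hz0, hxw, hz⟩

/-- If `y` solves `ẏ = T(y) − r*·e − y` and `x` solves
`ẋ = T(x) − f(x)·e − x` with `x 0 = y 0`, then `x t = y t + z t · e` where `z` is
differentiable, `z 0 = 0`, and `ż = −u·z + (r* − f(y))`. -/
theorem ode_difference_is_constant_vector [Nonempty A]
    (M : MDP S A R) (hcomm : M.Communicating)
    {L u : ℝ} (f : (S × A → ℝ) → ℝ) (hf : AdmissibleRef f L u)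
    (y x : ℝ → (S × A → ℝ))
    (hy : ∀ t ∈ Set.Ici (0 : ℝ),
      HasDerivWithinAt y (M.T (y t) - M.rStar • (fun _ => (1 : ℝ)) - y t) (Set.Ici 0) t)
    (hx : ∀ t ∈ Set.Ici (0 : ℝ),
      HasDerivWithinAt x (M.T (x t) - f (x t) • (fun _ => (1 : ℝ)) - x t) (Set.Ici 0) t)
    (h0 : x 0 = y 0) :
    ∃ z : ℝ → ℝ, z 0 = 0 ∧
      (∀ t ∈ Set.Ici (0 : ℝ), x t = y t + z t • (fun _ => (1 : ℝ))) ∧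
      ∀ t ∈ Set.Ici (0 : ℝ),
        HasDerivWithinAt z (-u * z t + (M.rStar - f (y t))) (Set.Ici 0) t :=
  ode_difference_is_constant_vector_general M f hf y x hy hx h0
end

section
/- Let the MDP be finite and communicating, let Q ∈ ℝ^{S×A}, and let π be any greedy policy with respect to Q (i.e., for every state s, π selects an action in argmax_a Q(s,a)). Then for every state s: min_{(s',a')} (T(Q)(s',a') − Q(s',a')) ≤ r(π, s) ≤ r* ≤ max_{(s',a')} (T(Q)(s',a') − Q(s',a')); in particular |r* − r(π, s)| ≤ sp(T(Q) − Q), where sp(x) := max x − min x. Consequently, if Q_t → q_∞ where q_∞ satisfies the Bellman optimality equation q_∞ = T(q_∞) − r*·e, and π_t is any greedy policy with respect to Q_t, then r(π_t, s) → r* for every state s. -/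
open Filter Topology Matrix

variable {S A R : Type*} [Fintype S] [Fintype A] [Fintype R] [DecidableEq S]

/-- `π` is a greedy policy with respect to `Q`: a policy putting positive probability only on
actions maximizing `Q(s, ·)`. -/
def IsGreedy (Q : S × A → ℝ) (π : S → A → ℝ) : Prop :=
  IsPolicy π ∧ ∀ s a, 0 < π s a → ∀ a', Q (s, a') ≤ Q (s, a)


/-!
Write `v(s) = max_a Q(s,a)` and let `c ≤ C` be the minimum and maximum of `T(Q) − Q`. Averaging
`T(Q)(s,·)` over a policy `π` gives the identity `r_π + P_π v = Σ_a π(·,a) T(Q)(·,a)`, which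
sandwiches `r_π` between `c + (v − P_π v)` (when `π` is greedy, so that `π` only charges actions
with `Q(s,a) = v(s)`) and `C + (v − P_π v)` (for every policy). The Cesàro means of
`P_π^t (v − P_π v)` telescope to `O(1/n)`, so the reward rate lies in `[c, C]`; it exists because
`ℝ^S = ker(1 − P_π) ⊕ range(1 − P_π)` for a stochastic matrix `P_π`.

For the convergence, `T` is `1`-Lipschitz in the sup norm and `T(q_∞) − q_∞ = r*`, so the span of
`T(Q_t) − Q_t` is at most `4 ‖Q_t − q_∞‖`.
-/

namespace Matrix

variable {ι : Type*} [Fintype ι] [DecidableEq ι] {P : Matrix ι ι ℝ}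

-- Pointwise and with `1 / N`, so that `MDP.rewardRate π s` is by definition the limit of
-- `cesaroMean (M.Pmat π) (M.rPi π) · s`; at `N = 0` the mean is the junk value `0`.
noncomputable def cesaroMean (P : Matrix ι ι ℝ) (x : ι → ℝ) (N : ℕ) : ι → ℝ :=
  fun s => (1 / (N : ℝ)) * ∑ t ∈ Finset.range N, ((P ^ t) *ᵥ x) s

lemma cesaroMean_add (P : Matrix ι ι ℝ) (x y : ι → ℝ) (N : ℕ) :
    cesaroMean P (x + y) N = cesaroMean P x N + cesaroMean P y N := by
  ext s
  simp only [cesaroMean, mulVec_add, Pi.add_apply, Finset.sum_add_distrib, mul_add]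

lemma cesaroMean_of_mulVec_eq {x : ι → ℝ} (hx : P *ᵥ x = x) {N : ℕ} (hN : N ≠ 0) :
    cesaroMean P x N = x := by
  have hpow : ∀ t, (P ^ t) *ᵥ x = x := fun t => by
    induction t with
    | zero => exact one_mulVec x
    | succ t ih => rw [pow_succ, ← mulVec_mulVec, hx, ih]
  ext s
  simp only [cesaroMean, hpow, Finset.sum_const, Finset.card_range, nsmul_eq_mul]
  field_simp

lemma sum_range_pow_mulVec_sub_mulVec (P : Matrix ι ι ℝ) (y : ι → ℝ) (N : ℕ) :
    ∑ t ∈ Finset.range N, (P ^ t) *ᵥ (y - P *ᵥ y) = y - (P ^ N) *ᵥ y := by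
  simp only [mulVec_sub, mulVec_mulVec, ← pow_succ]
  rw [Finset.sum_range_sub', pow_zero, one_mulVec]

lemma mulVec_mono_of_mem_rowStochastic (hP : P ∈ rowStochastic ℝ ι) {x y : ι → ℝ}
    (hxy : x ≤ y) : P *ᵥ x ≤ P *ᵥ y := by
  intro s
  have := nonneg_mulVec_of_mem_rowStochastic hP (x := y - x) (fun i => sub_nonneg.2 (hxy i)) s
  rwa [mulVec_sub, Pi.sub_apply, sub_nonneg] at this

lemma mulVec_const_of_mem_rowStochastic (hP : P ∈ rowStochastic ℝ ι) (c : ℝ) :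
    P *ᵥ (fun _ => c) = fun _ => c := by
  have : (fun _ : ι => c) = c • 1 := by ext; simp
  rw [this, mulVec_smul, one_vecMul_of_mem_rowStochastic hP]

lemma abs_mulVec_le_of_mem_rowStochastic (hP : P ∈ rowStochastic ℝ ι) (x : ι → ℝ) (s : ι) :
    |(P *ᵥ x) s| ≤ ‖x‖ := by
  have hlo : (fun _ => -‖x‖) ≤ x := fun i => neg_le_of_abs_le (norm_le_pi_norm x i)
  have hhi : x ≤ fun _ => ‖x‖ := fun i => le_of_abs_le (norm_le_pi_norm x i)
  have h1 := mulVec_mono_of_mem_rowStochastic hP hlo s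
  have h2 := mulVec_mono_of_mem_rowStochastic hP hhi s
  rw [mulVec_const_of_mem_rowStochastic hP] at h1 h2
  exact abs_le.2 ⟨h1, h2⟩

lemma cesaroMean_mono (hP : P ∈ rowStochastic ℝ ι) {x y : ι → ℝ} (hxy : x ≤ y) (N : ℕ) :
    cesaroMean P x N ≤ cesaroMean P y N := fun s => by
  unfold cesaroMean
  gcongr with t
  exact mulVec_mono_of_mem_rowStochastic (pow_mem hP t) hxy s

lemma tendsto_cesaroMean_sub_mulVec (hP : P ∈ rowStochastic ℝ ι) (y : ι → ℝ) :
    Tendsto (cesaroMean P (y - P *ᵥ y)) atTop (𝓝 0) := by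
  refine tendsto_pi_nhds.2 fun s => ?_
  have hsum (N : ℕ) :
      cesaroMean P (y - P *ᵥ y) N s = (1 / (N : ℝ)) * (y s - ((P ^ N) *ᵥ y) s) := by
    have := congrFun (sum_range_pow_mulVec_sub_mulVec P y N) s
    rw [Finset.sum_apply] at this
    rw [cesaroMean, this, Pi.sub_apply]
  simp only [hsum]
  refine squeeze_zero_norm (fun N => ?_) (tendsto_const_div_atTop_nhds_zero_nat (|y s| + ‖y‖))
  rw [norm_mul, Real.norm_eq_abs, Real.norm_eq_abs, abs_of_nonneg (by positivity), one_div,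
    inv_mul_eq_div]
  gcongr
  calc |y s - ((P ^ N) *ᵥ y) s| ≤ |y s| + |((P ^ N) *ᵥ y) s| := abs_sub _ _
    _ ≤ |y s| + ‖y‖ := by gcongr; exact abs_mulVec_le_of_mem_rowStochastic (pow_mem hP N) y s

lemma tendsto_cesaroMean_const_add_sub_mulVec (hP : P ∈ rowStochastic ℝ ι) (c : ℝ)
    (y : ι → ℝ) :
    Tendsto (cesaroMean P ((fun _ => c) + (y - P *ᵥ y))) atTop (𝓝 fun _ => c) := by
  have h := (tendsto_const_nhds (x := fun _ : ι => c)).add (tendsto_cesaroMean_sub_mulVec hP y)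
  rw [add_zero] at h
  refine h.congr' ?_
  filter_upwards [eventually_ne_atTop 0] with N hN
  rw [cesaroMean_add, cesaroMean_of_mulVec_eq (mulVec_const_of_mem_rowStochastic hP c) hN]

lemma const_le_of_tendsto_cesaroMean (hP : P ∈ rowStochastic ℝ ι) {c : ℝ} {y r u : ι → ℝ}
    (hr : (fun _ => c) + (y - P *ᵥ y) ≤ r) (hu : Tendsto (cesaroMean P r) atTop (𝓝 u)) :
    (fun _ => c) ≤ u :=
  le_of_tendsto_of_tendsto (tendsto_cesaroMean_const_add_sub_mulVec hP c y) hu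
    (Eventually.of_forall (cesaroMean_mono hP hr))

lemma le_const_of_tendsto_cesaroMean (hP : P ∈ rowStochastic ℝ ι) {C : ℝ} {y r u : ι → ℝ}
    (hr : r ≤ (fun _ => C) + (y - P *ᵥ y)) (hu : Tendsto (cesaroMean P r) atTop (𝓝 u)) :
    u ≤ fun _ => C :=
  le_of_tendsto_of_tendsto hu (tendsto_cesaroMean_const_add_sub_mulVec hP C y)
    (Eventually.of_forall (cesaroMean_mono hP hr))

lemma disjoint_ker_range_id_sub_mulVecLin (hP : P ∈ rowStochastic ℝ ι) :
    Disjoint (LinearMap.ker (LinearMap.id - P.mulVecLin))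
      (LinearMap.range (LinearMap.id - P.mulVecLin)) := by
  refine Submodule.disjoint_def.2 fun x hker ⟨y, hy⟩ => ?_
  have hfix : P *ᵥ x = x := by
    simpa [sub_eq_zero, eq_comm] using LinearMap.mem_ker.1 hker
  replace hy : y - P *ᵥ y = x := by simpa using hy
  have hx : Tendsto (cesaroMean P x) atTop (𝓝 x) :=
    tendsto_const_nhds.congr' <| (eventually_ne_atTop 0).mono fun N hN =>
      (cesaroMean_of_mulVec_eq hfix hN).symm
  exact tendsto_nhds_unique hx (hy ▸ tendsto_cesaroMean_sub_mulVec hP y)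

-- `ker (1 - P) ⊕ range (1 - P)` splits `x` into a fixed vector and a vector whose Cesàro means
-- telescope to `0`.
lemma exists_tendsto_cesaroMean (hP : P ∈ rowStochastic ℝ ι) (x : ι → ℝ) :
    ∃ u, Tendsto (cesaroMean P x) atTop (𝓝 u) := by
  set f : (ι → ℝ) →ₗ[ℝ] ι → ℝ := LinearMap.id - P.mulVecLin
  have hsup : LinearMap.ker f ⊔ LinearMap.range f = ⊤ :=
    Submodule.eq_top_of_disjoint _ _ (by rw [add_comm, LinearMap.finrank_range_add_finrank_ker])
      (disjoint_ker_range_id_sub_mulVecLin hP)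
  obtain ⟨u, hu, _, ⟨y, rfl⟩, rfl⟩ := Submodule.mem_sup.1 (hsup ▸ Submodule.mem_top (x := x))
  have hfix : P *ᵥ u = u := by
    simpa [f, sub_eq_zero, eq_comm] using LinearMap.mem_ker.1 hu
  refine ⟨u, ?_⟩
  have h := (tendsto_const_nhds (x := u)).add (tendsto_cesaroMean_sub_mulVec hP y)
  rw [add_zero] at h
  refine h.congr' ?_
  filter_upwards [eventually_ne_atTop 0] with N hN
  simp [f, cesaroMean_add, cesaroMean_of_mulVec_eq hfix hN]

end Matrix

section Policy

variable {S A : Type*} [Fintype A]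

noncomputable def greedyValue (Q : S × A → ℝ) : S → ℝ :=
  fun s => ⨆ a, Q (s, a)

lemma le_greedyValue (Q : S × A → ℝ) (s : S) (a : A) : Q (s, a) ≤ greedyValue Q s :=
  le_ciSup (f := fun a => Q (s, a)) (Set.finite_range _).bddAbove a

lemma greedyValue_le_add_dist [Fintype S] [Nonempty A] (Q q : S × A → ℝ) (s : S) :
    greedyValue Q s ≤ greedyValue q s + dist Q q :=
  ciSup_le fun a => calc
    Q (s, a) ≤ q (s, a) + dist Q q := by
      have := (abs_le.1 (Real.dist_eq _ _ ▸ dist_le_pi_dist Q q (s, a))).2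
      linarith
    _ ≤ greedyValue q s + dist Q q := by grw [le_greedyValue q s a]

lemma IsGreedy.apply_eq_greedyValue [Nonempty A] {Q : S × A → ℝ} {π : S → A → ℝ}
    (hg : IsGreedy Q π) {s : S} {a : A} (ha : 0 < π s a) : Q (s, a) = greedyValue Q s :=
  (le_greedyValue Q s a).antisymm (ciSup_le (hg.2 s a ha))

lemma IsPolicy.le_sum_mul {π : S → A → ℝ} (hπ : IsPolicy π) (s : S) {x : A → ℝ} {m : ℝ}
    (hx : ∀ a, 0 < π s a → m ≤ x a) : m ≤ ∑ a, π s a * x a := calc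
  m = ∑ a, π s a * m := by rw [← Finset.sum_mul, hπ.2 s, one_mul]
  _ ≤ ∑ a, π s a * x a := Finset.sum_le_sum fun a _ => by
    rcases (hπ.1 s a).eq_or_lt with h0 | hpos
    · simp [← h0]
    · exact mul_le_mul_of_nonneg_left (hx a hpos) hpos.le

lemma IsPolicy.sum_mul_le {π : S → A → ℝ} (hπ : IsPolicy π) (s : S) {x : A → ℝ} {C : ℝ}
    (hx : ∀ a, 0 < π s a → x a ≤ C) : ∑ a, π s a * x a ≤ C := by
  simpa [Finset.sum_neg_distrib] using neg_le_neg (hπ.le_sum_mul s (x := -x) (m := -C)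
    fun a ha => neg_le_neg (hx a ha))

end Policy

namespace MDP

section BellmanOperator

variable {S A R : Type*} [Fintype S] [Fintype A] [Fintype R] (M : MDP S A R) [Nonempty A]

lemma rPi_add_Pmat_mulVec_greedyValue (π : S → A → ℝ) (Q : S × A → ℝ) (s : S) :
    M.rPi π s + (M.Pmat π *ᵥ greedyValue Q) s = ∑ a, π s a * M.T Q (s, a) := by
  simp only [rPi, Pmat, T, greedyValue, mulVec, dotProduct, of_apply, mul_add,
    Finset.sum_add_distrib, Finset.sum_mul, Finset.mul_sum, mul_assoc]
  rw [Finset.sum_comm (s := Finset.univ (α := S)) (t := Finset.univ (α := A))]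

lemma T_sub_self_of_bellmanOpt {q : S × A → ℝ} {c : ℝ} (h : M.BellmanOpt q c) (sa : S × A) :
    M.T q sa - q sa = c := by
  obtain ⟨s, a⟩ := sa
  have hterm : ∀ s' r, M.p s a s' r * (M.rval r + ⨆ a', q (s', a'))
      - M.p s a s' r * (M.rval r - c + ⨆ a', q (s', a')) = M.p s a s' r * c := fun _ _ => by ring
  rw [h s a]
  simp only [T, ← Finset.sum_sub_distrib, hterm, ← Finset.sum_mul, M.p_sum_one,
    one_mul]

lemma T_le_add_dist (Q q : S × A → ℝ) (sa : S × A) : M.T Q sa ≤ M.T q sa + dist Q q := by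
  obtain ⟨s, a⟩ := sa
  calc M.T Q (s, a)
      ≤ ∑ s', ∑ r, M.p s a s' r * (M.rval r + (greedyValue q s' + dist Q q)) := by
        unfold T
        gcongr with s' _ r _
        · exact M.p_nonneg s a s' r
        · exact greedyValue_le_add_dist Q q s'
    _ = M.T q (s, a) + dist Q q := by
        simp only [T, mul_add, Finset.sum_add_distrib, ← Finset.sum_mul, M.p_sum_one, one_mul]
        rw [← add_assoc]
        rfl

lemma abs_T_sub_self_sub_le {q : S × A → ℝ} {c : ℝ} (h : M.BellmanOpt q c) (Q : S × A → ℝ)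
    (sa : S × A) : |M.T Q sa - Q sa - c| ≤ 2 * dist Q q := by
  have hT := M.T_le_add_dist Q q sa
  have hT' := dist_comm q Q ▸ M.T_le_add_dist q Q sa
  have hQ := abs_le.1 (Real.dist_eq _ _ ▸ dist_le_pi_dist Q q sa)
  rw [← M.T_sub_self_of_bellmanOpt h sa, abs_le]
  constructor <;> linarith [hQ.1, hQ.2]

lemma iSup_sub_iInf_T_sub_self_le [Nonempty S] {q : S × A → ℝ} {c : ℝ} (h : M.BellmanOpt q c)
    (Q : S × A → ℝ) :
    (⨆ sa, (M.T Q sa - Q sa)) - ⨅ sa, (M.T Q sa - Q sa) ≤ 4 * dist Q q := by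
  have hsup : ⨆ sa, (M.T Q sa - Q sa) ≤ c + 2 * dist Q q :=
    ciSup_le fun sa => by linarith [(abs_le.1 (M.abs_T_sub_self_sub_le h Q sa)).2]
  have hinf : c - 2 * dist Q q ≤ ⨅ sa, (M.T Q sa - Q sa) :=
    le_ciInf fun sa => by linarith [(abs_le.1 (M.abs_T_sub_self_sub_le h Q sa)).1]
  linarith

end BellmanOperator

variable (M : MDP S A R) {π : S → A → ℝ}

lemma Pmat_mem_rowStochastic (hπ : IsPolicy π) : M.Pmat π ∈ rowStochastic ℝ S := by
  refine mem_rowStochastic_iff_sum.2 ⟨fun s s' => ?_, fun s => ?_⟩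
  · exact Finset.sum_nonneg fun a _ => Finset.sum_nonneg fun r _ =>
      mul_nonneg (hπ.1 s a) (M.p_nonneg s a s' r)
  · simp only [Pmat, of_apply]
    rw [Finset.sum_comm]
    simp only [← Finset.mul_sum, M.p_sum_one, mul_one, hπ.2 s]

lemma tendsto_cesaroMean_rPi (hπ : IsPolicy π) :
    Tendsto (cesaroMean (M.Pmat π) (M.rPi π)) atTop (𝓝 (M.rewardRate π)) := by
  obtain ⟨u, hu⟩ := exists_tendsto_cesaroMean (M.Pmat_mem_rowStochastic hπ) (M.rPi π)
  convert hu
  ext s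
  exact (tendsto_pi_nhds.1 hu s).limUnder_eq

variable [Nonempty A]

lemma rewardRate_le_iSup (Q : S × A → ℝ) (hπ : IsPolicy π) (s : S) :
    M.rewardRate π s ≤ ⨆ sa, (M.T Q sa - Q sa) := by
  set C := ⨆ sa, (M.T Q sa - Q sa)
  refine le_const_of_tendsto_cesaroMean (M.Pmat_mem_rowStochastic hπ) (C := C) (y := greedyValue Q)
    (fun s => ?_) (M.tendsto_cesaroMean_rPi hπ) s
  have hT : ∀ a, M.T Q (s, a) ≤ C + greedyValue Q s := fun a => by
    have := le_ciSup (Set.finite_range fun sa => M.T Q sa - Q sa).bddAbove (s, a)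
    linarith [le_greedyValue Q s a]
  have := M.rPi_add_Pmat_mulVec_greedyValue π Q s
  have := hπ.sum_mul_le s fun a _ => hT a
  simp only [Pi.add_apply, Pi.sub_apply]
  linarith

lemma iInf_le_rewardRate {Q : S × A → ℝ} (hg : IsGreedy Q π) (s : S) :
    ⨅ sa, (M.T Q sa - Q sa) ≤ M.rewardRate π s := by
  set c := ⨅ sa, (M.T Q sa - Q sa)
  refine const_le_of_tendsto_cesaroMean (M.Pmat_mem_rowStochastic hg.1) (c := c) (y := greedyValue Q)
    (fun s => ?_) (M.tendsto_cesaroMean_rPi hg.1) s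
  have hT : ∀ a, 0 < π s a → c + greedyValue Q s ≤ M.T Q (s, a) := fun a ha => by
    have := ciInf_le (Set.finite_range fun sa => M.T Q sa - Q sa).bddBelow (s, a)
    linarith [hg.apply_eq_greedyValue ha]
  have := M.rPi_add_Pmat_mulVec_greedyValue π Q s
  have := hg.1.le_sum_mul s hT
  simp only [Pi.add_apply, Pi.sub_apply]
  linarith

lemma bddAbove_rewardRates : BddAbove {x | ∃ π s, IsPolicy π ∧ x = M.rewardRate π s} :=
  ⟨⨆ sa, (M.T 0 sa - 0), by rintro _ ⟨π, s, hπ, rfl⟩; exact M.rewardRate_le_iSup 0 hπ s⟩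

lemma rewardRate_le_rStar (hπ : IsPolicy π) (s : S) : M.rewardRate π s ≤ M.rStar :=
  le_csSup M.bddAbove_rewardRates ⟨π, s, hπ, rfl⟩

lemma rStar_le_iSup (Q : S × A → ℝ) (hπ : IsPolicy π) (s : S) :
    M.rStar ≤ ⨆ sa, (M.T Q sa - Q sa) :=
  csSup_le ⟨_, π, s, hπ, rfl⟩ fun _ ⟨_, s', hπ', hx⟩ => hx ▸ M.rewardRate_le_iSup Q hπ' s'

lemma abs_rStar_sub_rewardRate_le {Q : S × A → ℝ} (hg : IsGreedy Q π) (s : S) :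
    |M.rStar - M.rewardRate π s| ≤ (⨆ sa, (M.T Q sa - Q sa)) - ⨅ sa, (M.T Q sa - Q sa) := by
  have h1 := M.iInf_le_rewardRate hg s
  have h2 := M.rewardRate_le_rStar hg.1 s
  have h3 := M.rStar_le_iSup Q hg.1 s
  rw [abs_of_nonneg (sub_nonneg.2 h2)]
  linarith

end MDP

theorem greedy_reward_rate_bounds_and_convergence_general [Nonempty S] [Nonempty A]
    (M : MDP S A R) :
    (∀ (Q : S × A → ℝ) (π : S → A → ℝ), IsGreedy Q π → ∀ s : S,
      ((⨅ sa : S × A, (M.T Q sa - Q sa)) ≤ M.rewardRate π s ∧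
        M.rewardRate π s ≤ M.rStar ∧
        M.rStar ≤ ⨆ sa : S × A, (M.T Q sa - Q sa)) ∧
      |M.rStar - M.rewardRate π s| ≤
        (⨆ sa : S × A, (M.T Q sa - Q sa)) - ⨅ sa : S × A, (M.T Q sa - Q sa)) ∧
    (∀ (Qt : ℕ → S × A → ℝ) (qinf : S × A → ℝ) (πt : ℕ → S → A → ℝ),
      Tendsto Qt atTop (𝓝 qinf) →
      M.BellmanOpt qinf M.rStar →
      (∀ t, IsGreedy (Qt t) (πt t)) →
      ∀ s : S, Tendsto (fun t => M.rewardRate (πt t) s) atTop (𝓝 M.rStar)) := by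
  refine ⟨fun Q π hg s => ⟨⟨M.iInf_le_rewardRate hg s, M.rewardRate_le_rStar hg.1 s,
    M.rStar_le_iSup Q hg.1 s⟩, M.abs_rStar_sub_rewardRate_le hg s⟩, ?_⟩
  intro Qt qinf πt hQ hq hg s
  have hgap (t : ℕ) : dist (M.rewardRate (πt t) s) M.rStar ≤ 4 * dist (Qt t) qinf := by
    rw [Real.dist_eq, abs_sub_comm]
    exact (M.abs_rStar_sub_rewardRate_le (hg t) s).trans (M.iSup_sub_iInf_T_sub_self_le hq (Qt t))
  refine tendsto_iff_dist_tendsto_zero.2 (squeeze_zero (fun _ => dist_nonneg) hgap ?_)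
  simpa using (tendsto_iff_dist_tendsto_zero.1 hQ).const_mul 4

/-- For any `Q` and any greedy policy `π` w.r.t. `Q`, for every state `s`:
`min (T(Q) − Q) ≤ r(π,s) ≤ r* ≤ max (T(Q) − Q)`, hence `|r* − r(π,s)| ≤ sp(T(Q) − Q)`.
Consequently, if `Q_t → q_∞` with `q_∞ = T(q_∞) − r*·e` and `π_t` is greedy w.r.t. `Q_t`,
then `r(π_t, s) → r*` for every `s`. -/
theorem greedy_reward_rate_bounds_and_convergence [Nonempty S] [Nonempty A]
    (M : MDP S A R) (hcomm : M.Communicating) :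
    (∀ (Q : S × A → ℝ) (π : S → A → ℝ), IsGreedy Q π → ∀ s : S,
      ((⨅ sa : S × A, (M.T Q sa - Q sa)) ≤ M.rewardRate π s ∧
        M.rewardRate π s ≤ M.rStar ∧
        M.rStar ≤ ⨆ sa : S × A, (M.T Q sa - Q sa)) ∧
      |M.rStar - M.rewardRate π s| ≤
        (⨆ sa : S × A, (M.T Q sa - Q sa)) - ⨅ sa : S × A, (M.T Q sa - Q sa)) ∧
    (∀ (Qt : ℕ → S × A → ℝ) (qinf : S × A → ℝ) (πt : ℕ → S → A → ℝ),
      Tendsto Qt atTop (𝓝 qinf) →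
      M.BellmanOpt qinf M.rStar →
      (∀ t, IsGreedy (Qt t) (πt t)) →
      ∀ s : S, Tendsto (fun t => M.rewardRate (πt t) s) atTop (𝓝 M.rStar)) :=
  greedy_reward_rate_bounds_and_convergence_general M
end

section
/- Let P be a row-stochastic matrix indexed by a finite set S whose associated Markov chain is unichain, i.e., P has exactly one stationary distribution. Then every vector v ∈ ℝ^S satisfying P·v = v is a constant vector (a scalar multiple of the all-ones vector). Consequently, for any reward vector r_π ∈ ℝ^S and scalar r̄, any two solutions v of the equation v = r_π − r̄·e + P·v differ by a constant multiple of the all-ones vector. -/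
open Matrix Finset

lemma exists_stationary_supported
    {S : Type*} [Fintype S] (P : Matrix S S ℝ)
    (hnn : ∀ i j, 0 ≤ P i j) (hrow : ∀ i, ∑ j, P i j = 1)
    (A : Set S) (hA : A.Nonempty) (hclosed : ∀ i ∈ A, ∀ j ∉ A, P i j = 0) :
    ∃ d : S → ℝ, (∀ i, 0 ≤ d i) ∧ (∑ i, d i = 1) ∧
      (∀ j, ∑ i, d i * P i j = d j) ∧ ∀ j ∉ A, d j = 0 := by
  classical
  obtain ⟨i₀, hi₀⟩ := hA
  -- iterates of the point mass at i₀
  let μ : ℕ → S → ℝ := fun k => Nat.rec (fun j => if j = i₀ then 1 else 0)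
    (fun _ m => fun j => ∑ i, m i * P i j) k
  have hμ0 : μ 0 = fun j => if j = i₀ then 1 else 0 := rfl
  have hμs : ∀ k, μ (k+1) = fun j => ∑ i, μ k i * P i j := fun k => rfl
  have hμnn : ∀ k i, 0 ≤ μ k i := by
    intro k
    induction k with
    | zero => intro i; rw [hμ0]; positivity
    | succ k ih =>
      intro i; rw [hμs]
      exact Finset.sum_nonneg fun j _ => mul_nonneg (ih j) (hnn j i)
  have hμsum : ∀ k, ∑ i, μ k i = 1 := by
    intro k
    induction k with
    | zero => simp [hμ0]
    | succ k ih =>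
      rw [hμs]
      rw [Finset.sum_comm]
      simp_rw [← Finset.mul_sum]
      simp_rw [hrow]
      simpa using ih
  have hμsupp : ∀ k, ∀ j ∉ A, μ k j = 0 := by
    intro k
    induction k with
    | zero => intro j hj; rw [hμ0]; simp only; rw [if_neg]; rintro rfl; exact hj hi₀
    | succ k ih =>
      intro j hj; rw [hμs]
      apply Finset.sum_eq_zero
      intro i _
      by_cases hiA : i ∈ A
      · rw [hclosed i hiA j hj, mul_zero]
      · rw [ih i hiA, zero_mul]
  have hμle1 : ∀ k i, μ k i ≤ 1 := by
    intro k i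
    calc μ k i ≤ ∑ j, μ k j := Finset.single_le_sum (fun j _ => hμnn k j) (Finset.mem_univ i)
    _ = 1 := hμsum k
  -- Cesàro averages
  set y : ℕ → S → ℝ := fun n => (((n:ℝ)+1)⁻¹) • ∑ k ∈ Finset.range (n+1), μ k with hy
  set K : Set (S → ℝ) := {d | (∀ i, 0 ≤ d i) ∧ (∑ i, d i = 1) ∧ ∀ j ∉ A, d j = 0} with hKdef
  have hyK : ∀ n, y n ∈ K := by
    intro n
    have hpos : (0:ℝ) < (n:ℝ)+1 := by positivity
    refine ⟨?_, ?_, ?_⟩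
    · intro i
      apply mul_nonneg (by positivity)
      simp only [Finset.sum_apply]
      exact Finset.sum_nonneg fun k _ => hμnn k i
    · have : ∑ i, y n i = ((n:ℝ)+1)⁻¹ * ∑ k ∈ Finset.range (n+1), ∑ i, μ k i := by
        simp only [hy, Pi.smul_apply, smul_eq_mul, ← Finset.mul_sum, Finset.sum_apply]
        rw [Finset.sum_comm]
      rw [this]
      simp only [hμsum, Finset.sum_const, Finset.card_range, nsmul_eq_mul, mul_one]
      push_cast
      exact inv_mul_cancel₀ hpos.ne'
    · intro j hj
      simp only [hy, Pi.smul_apply, smul_eq_mul, Finset.sum_apply]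
      rw [Finset.sum_eq_zero fun k _ => hμsupp k j hj, mul_zero]
  have hKclosed : IsClosed K := by
    have h1 : ∀ i : S, IsClosed {d : S → ℝ | 0 ≤ d i} := fun i =>
      isClosed_le continuous_const (continuous_apply i)
    have h2 : IsClosed {d : S → ℝ | ∑ i, d i = 1} :=
      isClosed_eq (by continuity) continuous_const
    have h3 : ∀ j : S, IsClosed {d : S → ℝ | d j = 0} := fun j =>
      isClosed_eq (continuous_apply j) continuous_const
    have : K = (⋂ i, {d : S → ℝ | 0 ≤ d i}) ∩ ({d | ∑ i, d i = 1} ∩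
        ⋂ j ∈ {j | j ∉ A}, {d : S → ℝ | d j = 0}) := by
      ext d
      simp only [hKdef, Set.mem_setOf_eq, Set.mem_inter_iff, Set.mem_iInter]
    rw [this]
    exact (isClosed_iInter h1).inter (h2.inter (isClosed_biInter fun j _ => h3 j))
  have hKcpt : IsCompact K := by
    refine (isCompact_univ_pi fun _ : S => isCompact_Icc (a := (0:ℝ)) (b := 1)).of_isClosed_subset
      hKclosed ?_
    intro d hd
    intro i _
    refine ⟨hd.1 i, ?_⟩
    calc d i ≤ ∑ j, d j := Finset.single_le_sum (fun j _ => hd.1 j) (Finset.mem_univ i)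
    _ = 1 := hd.2.1
  obtain ⟨d, hdK, φ, hφ, hlim⟩ := hKcpt.tendsto_subseq hyK
  refine ⟨d, hdK.1, hdK.2.1, ?_, hdK.2.2⟩
  intro j
  -- componentwise limit argument
  have hcomp : ∀ i : S, Filter.Tendsto (fun n => y (φ n) i) Filter.atTop (nhds (d i)) :=
    fun i => ((continuous_apply i).tendsto d).comp hlim
  have hcont : Filter.Tendsto (fun n => ∑ i, y (φ n) i * P i j) Filter.atTop
      (nhds (∑ i, d i * P i j)) := by
    apply tendsto_finset_sum
    intro i _
    exact (hcomp i).mul tendsto_const_nhds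
  -- the defect
  have hdefect : ∀ n, ∑ i, y n i * P i j - y n j
      = ((n:ℝ)+1)⁻¹ * (μ (n+1) j - μ 0 j) := by
    intro n
    have h1 : ∑ i, y n i * P i j = ((n:ℝ)+1)⁻¹ * ∑ k ∈ Finset.range (n+1), μ (k+1) j := by
      simp only [hy, Pi.smul_apply, smul_eq_mul, Finset.sum_apply, Finset.mul_sum]
      simp_rw [Finset.sum_mul]
      rw [Finset.sum_comm]
      refine Finset.sum_congr rfl fun k _ => ?_
      rw [hμs]
      simp [Finset.mul_sum, mul_assoc]
    have h2 : y n j = ((n:ℝ)+1)⁻¹ * ∑ k ∈ Finset.range (n+1), μ k j := by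
      simp [hy, Finset.sum_apply]
    rw [h1, h2, ← mul_sub]
    congr 1
    rw [Finset.sum_range_succ (fun k => μ (k+1) j) n,
      Finset.sum_range_succ' (fun k => μ k j) n]
    ring
  have hzero : Filter.Tendsto (fun n => ∑ i, y (φ n) i * P i j - y (φ n) j)
      Filter.atTop (nhds 0) := by
    apply squeeze_zero_norm (a := fun n => ((φ n : ℝ)+1)⁻¹ * 1)
    · intro n
      show ‖∑ i, y (φ n) i * P i j - y (φ n) j‖ ≤ ((φ n : ℝ)+1)⁻¹ * 1
      rw [hdefect]
      rw [norm_mul]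
      gcongr
      · rw [Real.norm_eq_abs, abs_inv]
        rw [abs_of_pos (by positivity)]
      · rw [Real.norm_eq_abs, abs_le]
        constructor
        · linarith [hμnn (φ n + 1) j, hμle1 0 j]
        · linarith [hμle1 (φ n + 1) j, hμnn 0 j]
    · simp only [mul_one]
      apply Filter.Tendsto.comp (tendsto_inv_atTop_zero)
      apply Filter.tendsto_atTop_add_const_right
      exact (tendsto_natCast_atTop_atTop).comp hφ.tendsto_atTop
  have := tendsto_nhds_unique (hcont.sub (hcomp j)) hzero
  linarith [this]


/-- If `P` is a row-stochastic matrix on a finite set `S` with exactly one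
stationary distribution (unichain), then every `v` with `P·v = v` is constant; consequently,
any two solutions of `v = r_π − r̄·e + P·v` differ by a constant multiple of the all-ones
vector. -/
theorem unichain_harmonic_vectors_constant {S : Type*} [Fintype S]
    (P : Matrix S S ℝ)
    (hP : (∀ i j, 0 ≤ P i j) ∧ ∀ i, ∑ j : S, P i j = 1)
    (huni : ∃! d : S → ℝ, (∀ i, 0 ≤ d i) ∧ (∑ i : S, d i = 1) ∧
      ∀ j, ∑ i : S, d i * P i j = d j) :
    (∀ v : S → ℝ, P *ᵥ v = v → ∃ c : ℝ, v = fun _ => c) ∧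
    ∀ (rπ : S → ℝ) (rbar : ℝ) (v₁ v₂ : S → ℝ),
      v₁ = rπ - rbar • (fun _ => (1 : ℝ)) + P *ᵥ v₁ →
      v₂ = rπ - rbar • (fun _ => (1 : ℝ)) + P *ᵥ v₂ →
      ∃ c : ℝ, ∀ s, v₁ s = v₂ s + c := by
  classical
  obtain ⟨hnn, hrow⟩ := hP
  -- S is nonempty (else no probability vector exists)
  have hne : Nonempty S := by
    by_contra h
    obtain ⟨d, ⟨_, hsum, _⟩, _⟩ := huni
    have hE : IsEmpty S := ⟨fun s => h ⟨s⟩⟩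
    rw [Finset.univ_eq_empty, Finset.sum_empty] at hsum
    exact one_ne_zero hsum.symm
  have part1 : ∀ v : S → ℝ, P *ᵥ v = v → ∃ c : ℝ, v = fun _ => c := by
    intro v hv
    have hv' : ∀ i, ∑ j, P i j * v j = v i := fun i => congrFun hv i
    -- max and min of v
    obtain ⟨iM, _, hM⟩ := Finset.exists_max_image Finset.univ v Finset.univ_nonempty
    obtain ⟨im, _, hm⟩ := Finset.exists_min_image Finset.univ v Finset.univ_nonempty
    set M := v iM with hMdef
    set m := v im with hmdef
    -- the max set and min set are closed
    have hclosed_gen : ∀ (c : ℝ), (∀ j, v j ≤ c) →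
        ∀ i, v i = c → ∀ j, v j ≠ c → P i j = 0 := by
      intro c hle i hi j hj
      have hsum0 : ∑ j, P i j * (c - v j) = 0 := by
        have : ∑ j, P i j * (c - v j) = (∑ j, P i j) * c - ∑ j, P i j * v j := by
          rw [Finset.sum_mul, ← Finset.sum_sub_distrib]
          congr 1; ext k; ring
        rw [this, hrow, hv', hi, one_mul, sub_self]
      have hterm : ∀ k ∈ Finset.univ, 0 ≤ P i k * (c - v k) :=
        fun k _ => mul_nonneg (hnn i k) (by linarith [hle k])
      have := (Finset.sum_eq_zero_iff_of_nonneg hterm).mp hsum0 j (Finset.mem_univ j)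
      rcases mul_eq_zero.mp this with h | h
      · exact h
      · exact absurd (by linarith [hle j] : v j = c) hj
    -- stationary distributions supported on max and min sets
    by_cases hconst : M = m
    · refine ⟨M, funext fun s => ?_⟩
      have h1 : v s ≤ M := hM s (Finset.mem_univ s)
      have h2 : m ≤ v s := hm s (Finset.mem_univ s)
      show v s = M
      rw [hconst] at *
      linarith
    · exfalso
      -- max set
      obtain ⟨d₁, hd₁nn, hd₁sum, hd₁stat, hd₁supp⟩ :=
        exists_stationary_supported P hnn hrow {i | v i = M} ⟨iM, rfl⟩
          (fun i hi j hj => hclosed_gen M (fun k => hM k (Finset.mem_univ k)) i hi j hj)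
      -- min set: apply to -v
      have hm' : ∀ j, -v j ≤ -m := fun j => neg_le_neg (hm j (Finset.mem_univ j))
      have hminclosed : ∀ i ∈ {i | v i = m}, ∀ j ∉ {i | v i = m}, P i j = 0 := by
        intro i hi j hj
        have hsum0 : ∑ k, P i k * (v k - m) = 0 := by
          have : ∑ k, P i k * (v k - m) = ∑ k, P i k * v k - (∑ k, P i k) * m := by
            rw [Finset.sum_mul, ← Finset.sum_sub_distrib]
            congr 1; ext k; ring
          rw [this, hrow, hv', hi, one_mul, sub_self]
        have hterm : ∀ k ∈ Finset.univ, 0 ≤ P i k * (v k - m) :=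
          fun k _ => mul_nonneg (hnn i k) (by linarith [hm k (Finset.mem_univ k)])
        have := (Finset.sum_eq_zero_iff_of_nonneg hterm).mp hsum0 j (Finset.mem_univ j)
        rcases mul_eq_zero.mp this with h | h
        · exact h
        · exact absurd (by linarith : v j = m) hj
      obtain ⟨d₂, hd₂nn, hd₂sum, hd₂stat, hd₂supp⟩ :=
        exists_stationary_supported P hnn hrow {i | v i = m} ⟨im, rfl⟩ hminclosed
      obtain ⟨d₀, _, hd₀⟩ := huni
      have e₁ : d₁ = d₀ := hd₀ d₁ ⟨hd₁nn, hd₁sum, hd₁stat⟩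
      have e₂ : d₂ = d₀ := hd₀ d₂ ⟨hd₂nn, hd₂sum, hd₂stat⟩
      have e : d₁ = d₂ := e₁.trans e₂.symm
      have : ∃ j, d₁ j ≠ 0 := by
        by_contra h
        push_neg at h
        rw [Finset.sum_eq_zero (fun i _ => h i)] at hd₁sum
        exact one_ne_zero hd₁sum.symm
      obtain ⟨j, hj⟩ := this
      have hjA : v j = M := by
        by_contra hjA
        exact hj (hd₁supp j hjA)
      have hjB : v j ≠ m := fun h => hconst (hjA ▸ h)
      have hz : d₂ j = 0 := hd₂supp j hjB
      rw [e] at hj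
      exact hj hz
  refine ⟨part1, ?_⟩
  intro rπ rbar v₁ v₂ h₁ h₂
  have hw : P *ᵥ (v₁ - v₂) = v₁ - v₂ := by
    rw [Matrix.mulVec_sub]
    conv_rhs => rw [h₁, h₂]
    ext s
    simp
  obtain ⟨c, hc⟩ := part1 (v₁ - v₂) hw
  exact ⟨c, fun s => by have := congrFun hc s; simp only [Pi.sub_apply] at this; linarith⟩
end

section
/- Let π be a stationary Markov policy on a finite MDP whose induced Markov chain is unichain, with stationary distribution d_π and reward rate r(π). Define the bias v_π(s) := lim_{n→∞} (1/n) Σ_{k=1}^{n} Σ_{t=1}^{k} (E[R_t | S_0 = s, A ∼ π] − r(π)); this limit exists for every s. Then: (1) the pair (v, r̄) = (v_π, r(π)) is the unique solution of the evaluation Bellman equation v(s) = Σ_a π(a|s) Σ_{s',r} p(s',r|s,a)·(r − r̄ + v(s')) for all s, together with the constraint Σ_s d_π(s)·v(s) = 0; and (2) if v = v_π + c·e for some c ∈ ℝ, then c = Σ_s d_π(s)·v(s). -/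
open Filter Topology Matrix


namespace MDPaux

variable {S : Type*} [Fintype S] [DecidableEq S]

lemma pow_entry_nonneg {P : Matrix S S ℝ} (h0 : ∀ s s', 0 ≤ P s s') (t : ℕ) :
    ∀ s s', 0 ≤ (P ^ t) s s' := by
  induction t with
  | zero =>
    intro s s'
    rw [pow_zero, Matrix.one_apply]
    split_ifs <;> norm_num
  | succ t ih =>
    intro s s'
    rw [pow_succ, Matrix.mul_apply]
    exact Finset.sum_nonneg fun k _ => mul_nonneg (ih s k) (h0 k s')

lemma pow_row_sum {P : Matrix S S ℝ} (h1 : ∀ s, ∑ s', P s s' = 1) (t : ℕ) :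
    ∀ s, ∑ s', (P ^ t) s s' = 1 := by
  induction t with
  | zero =>
    intro s
    simp [pow_zero, Matrix.one_apply]
  | succ t ih =>
    intro s
    simp only [pow_succ, Matrix.mul_apply]
    rw [Finset.sum_comm]
    calc ∑ k, ∑ s', (P ^ t) s k * P k s'
        = ∑ k, (P ^ t) s k * ∑ s', P k s' := by
          exact Finset.sum_congr rfl fun k _ => (Finset.mul_sum _ _ _).symm
      _ = ∑ k, (P ^ t) s k := by
          exact Finset.sum_congr rfl fun k _ => by rw [h1 k, mul_one]
      _ = 1 := ih s

lemma pow_entry_le_one {P : Matrix S S ℝ} (h0 : ∀ s s', 0 ≤ P s s')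
    (h1 : ∀ s, ∑ s', P s s' = 1) (t : ℕ) (s s' : S) : (P ^ t) s s' ≤ 1 := by
  have := Finset.single_le_sum (f := fun k => (P ^ t) s k)
    (fun k _ => pow_entry_nonneg h0 t s k) (Finset.mem_univ s')
  rw [pow_row_sum h1 t s] at this
  exact this

lemma shift_sum (P : Matrix S S ℝ) (n : ℕ) (s s' : S) :
    ∑ t ∈ Finset.range n, (P ^ (t + 1)) s s'
      = ∑ t ∈ Finset.range n, (P ^ t) s s' + (P ^ n) s s' - (1 : Matrix S S ℝ) s s' := by
  have h1 := Finset.sum_range_succ' (fun t => (P ^ t) s s') n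
  have h2 := Finset.sum_range_succ (fun t => (P ^ t) s s') n
  simp only [pow_zero] at h1
  linarith

lemma small_tendsto {f : ℕ → ℝ} (h : ∀ n, |f n| ≤ 1) :
    Tendsto (fun n : ℕ => (1 / (n : ℝ)) * f n) atTop (𝓝 0) := by
  refine squeeze_zero_norm (fun n => ?_) tendsto_one_div_atTop_nhds_zero_nat
  have hn : (0:ℝ) ≤ 1 / (n:ℝ) := by positivity
  calc ‖1 / (n:ℝ) * f n‖ = 1 / (n:ℝ) * |f n| := by
        rw [Real.norm_eq_abs, abs_mul, abs_of_nonneg hn]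
    _ ≤ 1 / (n:ℝ) * 1 := mul_le_mul_of_nonneg_left (h n) hn
    _ = 1 / (n:ℝ) := mul_one _

/-- Key rearrangement: `(A_n P)(s,s') = (1/n) ∑_{t<n} P^{t+1}(s,s')`. -/
lemma avg_mul (P : Matrix S S ℝ) (n : ℕ) (s s' : S) :
    ∑ k, ((1 / (n : ℝ)) * ∑ t ∈ Finset.range n, (P ^ t) s k) * P k s'
      = (1 / (n : ℝ)) * ∑ t ∈ Finset.range n, (P ^ (t + 1)) s s' := by
  calc ∑ k, ((1 / (n : ℝ)) * ∑ t ∈ Finset.range n, (P ^ t) s k) * P k s'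
      = (1 / (n : ℝ)) * ∑ k, ∑ t ∈ Finset.range n, (P ^ t) s k * P k s' := by
        rw [Finset.mul_sum]
        exact Finset.sum_congr rfl fun k _ => by rw [mul_assoc, Finset.sum_mul]
    _ = (1 / (n : ℝ)) * ∑ t ∈ Finset.range n, ∑ k, (P ^ t) s k * P k s' := by
        rw [Finset.sum_comm]
    _ = (1 / (n : ℝ)) * ∑ t ∈ Finset.range n, (P ^ (t + 1)) s s' := by
        congr 1

/-- Cesàro convergence of powers of a stochastic matrix with unique stationary
distribution. -/
lemma cesaro {P : Matrix S S ℝ} (h0 : ∀ s s', 0 ≤ P s s') (h1 : ∀ s, ∑ s', P s s' = 1)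
    {d : S → ℝ}
    (hu : ∀ d' : S → ℝ, (∀ s, 0 ≤ d' s) → (∑ s, d' s = 1) →
      (∀ s', ∑ s, d' s * P s s' = d' s') → d' = d) :
    Tendsto (fun n : ℕ => fun s s' : S => (1 / (n:ℝ)) * ∑ t ∈ Finset.range n, (P ^ t) s s')
      atTop (𝓝 (fun _ s' : S => d s')) := by
  set A : ℕ → S → S → ℝ :=
    fun n s s' => (1 / (n:ℝ)) * ∑ t ∈ Finset.range n, (P ^ t) s s' with hAdef
  set K : Set (S → S → ℝ) :=
    Set.univ.pi (fun _ : S => Set.univ.pi fun _ : S => Set.Icc (0:ℝ) 1) with hKdef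
  have hKc : IsCompact K :=
    isCompact_univ_pi fun _ => isCompact_univ_pi fun _ => isCompact_Icc
  have hmem : ∀ n, A n ∈ K := by
    intro n
    simp only [hKdef, Set.mem_pi, Set.mem_univ, forall_true_left, Set.mem_Icc]
    intro s s'
    rcases Nat.eq_zero_or_pos n with hn | hn
    · subst hn; simp [hAdef]
    constructor
    · have : (0:ℝ) ≤ ∑ t ∈ Finset.range n, (P ^ t) s s' :=
        Finset.sum_nonneg fun t _ => pow_entry_nonneg h0 t s s'
      positivity
    · have hb : ∑ t ∈ Finset.range n, (P ^ t) s s' ≤ (n : ℝ) := by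
        calc ∑ t ∈ Finset.range n, (P ^ t) s s' ≤ ∑ _t ∈ Finset.range n, (1:ℝ) :=
            Finset.sum_le_sum fun t _ => pow_entry_le_one h0 h1 t s s'
          _ = (n : ℝ) := by simp
      have hnpos : (0:ℝ) < (n:ℝ) := by exact_mod_cast hn
      calc A n s s' ≤ (1 / (n:ℝ)) * (n:ℝ) :=
          mul_le_mul_of_nonneg_left hb (by positivity)
        _ = 1 := by field_simp
  refine tendsto_of_subseq_tendsto fun ns hns => ?_
  obtain ⟨a, ha, φ, hφ, hconv⟩ := hKc.tendsto_subseq (x := fun n => A (ns n)) (fun n => hmem _)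
  refine ⟨φ, ?_⟩
  have hσ : Tendsto (fun m => ns (φ m)) atTop atTop := hns.comp hφ.tendsto_atTop
  have hentry : ∀ s s', Tendsto (fun m => A (ns (φ m)) s s') atTop (𝓝 (a s s')) := by
    intro s s'
    exact (tendsto_pi_nhds.1 ((tendsto_pi_nhds.1 hconv) s)) s'
  have haIcc : ∀ s s', a s s' ∈ Set.Icc (0:ℝ) 1 := by
    intro s s'
    have := ha
    simp only [hKdef, Set.mem_pi, Set.mem_univ, forall_true_left] at this
    exact this s s'
  -- each row of `a` is a stationary distribution
  have hrow : ∀ s : S, a s = d := by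
    intro s
    refine hu (a s) (fun s' => (haIcc s s').1) ?_ ?_
    · -- row sums to 1
      have hL : Tendsto (fun m => ∑ s', A (ns (φ m)) s s') atTop (𝓝 (∑ s', a s s')) :=
        tendsto_finset_sum _ fun s' _ => hentry s s'
      have hev : ∀ᶠ m in atTop, ∑ s', A (ns (φ m)) s s' = 1 := by
        have h1' : ∀ᶠ m in atTop, 1 ≤ ns (φ m) := hσ.eventually_ge_atTop 1
        filter_upwards [h1'] with m hm
        have hnz : ((ns (φ m) : ℝ)) ≠ 0 := by
          have : ns (φ m) ≠ 0 := by omega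
          exact_mod_cast this
        calc ∑ s', A (ns (φ m)) s s'
            = (1 / (ns (φ m) : ℝ)) * ∑ s', ∑ t ∈ Finset.range (ns (φ m)), (P ^ t) s s' := by
              rw [Finset.mul_sum]
          _ = (1 / (ns (φ m) : ℝ)) * ∑ t ∈ Finset.range (ns (φ m)), ∑ s', (P ^ t) s s' := by
              rw [Finset.sum_comm]
          _ = (1 / (ns (φ m) : ℝ)) * (ns (φ m) : ℝ) := by
              rw [Finset.sum_congr rfl fun t _ => pow_row_sum h1 t s]
              simp
          _ = 1 := by field_simp
      have hR : Tendsto (fun m => ∑ s', A (ns (φ m)) s s') atTop (𝓝 1) :=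
        Tendsto.congr' (hev.mono fun m hm => hm.symm) tendsto_const_nhds
      exact tendsto_nhds_unique hL hR
    · -- stationarity of the row
      intro s'
      have hL : Tendsto (fun m => ∑ k, A (ns (φ m)) s k * P k s') atTop
          (𝓝 (∑ k, a s k * P k s')) :=
        tendsto_finset_sum _ fun k _ => (hentry s k).mul_const _
      have hid : ∀ n : ℕ, ∑ k, A n s k * P k s'
          = A n s s' + (1 / (n:ℝ)) * ((P ^ n) s s' - (1 : Matrix S S ℝ) s s') := by
        intro n
        rw [hAdef]
        rw [avg_mul P n s s', shift_sum P n s s']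
        ring
      have hR : Tendsto (fun m => ∑ k, A (ns (φ m)) s k * P k s') atTop (𝓝 (a s s')) := by
        have hz : Tendsto (fun m => (1 / ((ns (φ m)):ℝ)) *
            ((P ^ (ns (φ m))) s s' - (1 : Matrix S S ℝ) s s')) atTop (𝓝 0) := by
          have hb : ∀ n : ℕ, |(P ^ n) s s' - (1 : Matrix S S ℝ) s s'| ≤ 1 := by
            intro n
            have h01 := pow_entry_nonneg h0 n s s'
            have h11 := pow_entry_le_one h0 h1 n s s'
            rw [Matrix.one_apply]
            split_ifs <;> rw [abs_le] <;> constructor <;> linarith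
          exact (small_tendsto hb).comp hσ
        have := (hentry s s').add hz
        rw [add_zero] at this
        exact this.congr fun m => (hid _).symm
      exact tendsto_nhds_unique hL hR
  have haeq : a = fun _ s' : S => d s' := funext fun s => hrow s
  rw [haeq] at hconv
  exact hconv

lemma harmonic_eq_zero {P : Matrix S S ℝ} {d x : S → ℝ}
    (hC : ∀ s s', Tendsto (fun n : ℕ => (1 / (n:ℝ)) * ∑ t ∈ Finset.range n, (P ^ t) s s')
      atTop (𝓝 (d s')))
    (hx : ∀ s, x s = ∑ k, P s k * x k) (hdx : ∑ k, d k * x k = 0) : ∀ s, x s = 0 := by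
  have hpow : ∀ (t : ℕ) (s : S), x s = ∑ k, (P ^ t) s k * x k := by
    intro t
    induction t with
    | zero => intro s; simp [Matrix.one_apply]
    | succ t ih =>
      intro s
      calc x s = ∑ k, P s k * x k := hx s
        _ = ∑ k, P s k * ∑ j, (P ^ t) k j * x j :=
            Finset.sum_congr rfl fun k _ => by rw [← ih k]
        _ = ∑ k, ∑ j, P s k * ((P ^ t) k j * x j) :=
            Finset.sum_congr rfl fun k _ => Finset.mul_sum _ _ _
        _ = ∑ j, ∑ k, P s k * ((P ^ t) k j * x j) := Finset.sum_comm
        _ = ∑ j, (∑ k, P s k * (P ^ t) k j) * x j := by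
            refine Finset.sum_congr rfl fun j _ => ?_
            rw [Finset.sum_mul]
            exact Finset.sum_congr rfl fun k _ => by ring
        _ = ∑ j, (P ^ (t + 1)) s j * x j :=
            Finset.sum_congr rfl fun j _ => by rw [← Matrix.mul_apply, ← pow_succ']
  intro s
  have hL : Tendsto (fun n : ℕ => ∑ k, ((1 / (n:ℝ)) * ∑ t ∈ Finset.range n, (P ^ t) s k) * x k)
      atTop (𝓝 (∑ k, d k * x k)) :=
    tendsto_finset_sum _ fun k _ => (hC s k).mul_const _
  have hev : ∀ᶠ n : ℕ in atTop,
      (∑ k, ((1 / (n:ℝ)) * ∑ t ∈ Finset.range n, (P ^ t) s k) * x k) = x s := by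
    filter_upwards [eventually_ge_atTop 1] with n hn
    have hnz : ((n:ℕ):ℝ) ≠ 0 := by
      have : n ≠ 0 := by omega
      exact_mod_cast this
    calc ∑ k, ((1 / (n:ℝ)) * ∑ t ∈ Finset.range n, (P ^ t) s k) * x k
        = (1 / (n:ℝ)) * ∑ k, (∑ t ∈ Finset.range n, (P ^ t) s k) * x k := by
          rw [Finset.mul_sum]
          exact Finset.sum_congr rfl fun k _ => by ring
      _ = (1 / (n:ℝ)) * ∑ k, ∑ t ∈ Finset.range n, (P ^ t) s k * x k := by
          congr 1
          exact Finset.sum_congr rfl fun k _ => Finset.sum_mul _ _ _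
      _ = (1 / (n:ℝ)) * ∑ t ∈ Finset.range n, ∑ k, (P ^ t) s k * x k := by
          rw [Finset.sum_comm]
      _ = (1 / (n:ℝ)) * ∑ t ∈ Finset.range n, x s := by
          congr 1
          exact Finset.sum_congr rfl fun t _ => (hpow t s).symm
      _ = (1 / (n:ℝ)) * ((n:ℝ) * x s) := by
          rw [Finset.sum_const, Finset.card_range, nsmul_eq_mul]
      _ = x s := by field_simp
  have h2 : Tendsto (fun _ : ℕ => x s) atTop (𝓝 (∑ k, d k * x k)) :=
    hL.congr' hev
  rw [hdx] at h2
  exact tendsto_nhds_unique tendsto_const_nhds h2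

end MDPaux



variable {S A R : Type*} [Fintype S] [Fintype A] [Fintype R] [DecidableEq S]

/-- `d` is a stationary distribution of the Markov chain induced by `π`: a probability
vector with `dᵀ P_π = dᵀ`. -/
def MDP.IsStationaryDist (M : MDP S A R) (π : S → A → ℝ) (d : S → ℝ) : Prop :=
  (∀ s, 0 ≤ d s) ∧ (∑ s : S, d s = 1) ∧ ∀ s', ∑ s : S, d s * M.Pmat π s s' = d s'

/-- `v` solves the evaluation Bellman equation for policy `π` with offset `rbar`:
`v(s) = Σ_a π(a|s) Σ_{s',r} p(s',r|s,a) (r − rbar + v(s'))`. -/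
def MDP.BellmanEval (M : MDP S A R) (π : S → A → ℝ) (v : S → ℝ) (rbar : ℝ) : Prop :=
  ∀ s : S, v s = ∑ a : A, π s a * ∑ s' : S, ∑ r : R,
    M.p s a s' r * (M.rval r - rbar + v s')

/-- The bias (differential state-value function)
`v_π(s) = lim_n (1/n) Σ_{k=1}^n Σ_{t=1}^k (E[R_t | S_0 = s] − r(π))`, where
`E[R_t | S_0 = s] = (P_π^(t-1) r_π)(s)`. -/
noncomputable def MDP.bias (M : MDP S A R) (π : S → A → ℝ) (rr : ℝ) (s : S) : ℝ :=
  limUnder atTop (fun n : ℕ =>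
    (1 / (n : ℝ)) * ∑ k ∈ Finset.range n, ∑ t ∈ Finset.range (k + 1),
      (((M.Pmat π ^ t) *ᵥ M.rPi π) s - rr))

/-- For a unichain policy `π` with stationary distribution `d_π` and reward
rate `r(π) = Σ_s d_π(s) r_π(s)`: the bias limit exists for every `s`; `(v_π, r(π))` is the
unique solution of the evaluation Bellman equation together with `Σ_s d_π(s) v(s) = 0`; and
if `v = v_π + c·e` then `c = Σ_s d_π(s) v(s)`. -/
theorem bias_unique_solution_of_bellman_with_centering
    (M : MDP S A R) (π : S → A → ℝ) (hπ : IsPolicy π)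
    (d : S → ℝ) (hd : M.IsStationaryDist π d)
    (hduniq : ∀ d', M.IsStationaryDist π d' → d' = d) :
    (∀ s : S, Tendsto (fun n : ℕ =>
        (1 / (n : ℝ)) * ∑ k ∈ Finset.range n, ∑ t ∈ Finset.range (k + 1),
          (((M.Pmat π ^ t) *ᵥ M.rPi π) s - ∑ s' : S, d s' * M.rPi π s'))
      atTop (𝓝 (M.bias π (∑ s' : S, d s' * M.rPi π s') s))) ∧
    (M.BellmanEval π (M.bias π (∑ s' : S, d s' * M.rPi π s'))
        (∑ s' : S, d s' * M.rPi π s') ∧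
      ∑ s : S, d s * M.bias π (∑ s' : S, d s' * M.rPi π s') s = 0) ∧
    (∀ (v : S → ℝ) (rbar : ℝ), M.BellmanEval π v rbar → (∑ s : S, d s * v s = 0) →
      v = M.bias π (∑ s' : S, d s' * M.rPi π s') ∧ rbar = ∑ s' : S, d s' * M.rPi π s') ∧
    (∀ (c : ℝ) (v : S → ℝ),
      (∀ s, v s = M.bias π (∑ s' : S, d s' * M.rPi π s') s + c) →
      c = ∑ s : S, d s * v s) := by
  classical
  obtain ⟨hπ0, hπ1⟩ := hπ
  obtain ⟨hd0, hd1, hdst⟩ := hd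
  set P := M.Pmat π with hPdef
  set r := M.rPi π with hrdef
  set rr := ∑ s' : S, d s' * r s' with hrrdef
  -- basic facts about P
  have hP0 : ∀ s s', 0 ≤ P s s' := by
    intro s s'
    show 0 ≤ ∑ a, ∑ ρ, π s a * M.p s a s' ρ
    exact Finset.sum_nonneg fun a _ => Finset.sum_nonneg fun ρ _ =>
      mul_nonneg (hπ0 s a) (M.p_nonneg s a s' ρ)
  have hP1 : ∀ s, ∑ s', P s s' = 1 := by
    intro s
    show (∑ s', ∑ a, ∑ ρ, π s a * M.p s a s' ρ) = 1
    rw [Finset.sum_comm]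
    calc ∑ a, ∑ s', ∑ ρ, π s a * M.p s a s' ρ
        = ∑ a, π s a * ∑ s', ∑ ρ, M.p s a s' ρ := by
          refine Finset.sum_congr rfl fun a _ => ?_
          rw [Finset.mul_sum]
          exact Finset.sum_congr rfl fun s' _ => (Finset.mul_sum _ _ _).symm
      _ = ∑ a, π s a := Finset.sum_congr rfl fun a _ => by rw [M.p_sum_one s a, mul_one]
      _ = 1 := hπ1 s
  -- Cesàro convergence
  have hu : ∀ d' : S → ℝ, (∀ s, 0 ≤ d' s) → (∑ s, d' s = 1) →
      (∀ s', ∑ s, d' s * P s s' = d' s') → d' = d :=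
    fun d' h0' h1' h2' => hduniq d' ⟨h0', h1', h2'⟩
  have hces := MDPaux.cesaro hP0 hP1 hu
  have hC : ∀ s s', Tendsto (fun n : ℕ => (1 / (n:ℝ)) * ∑ t ∈ Finset.range n, (P ^ t) s s')
      atTop (𝓝 (d s')) :=
    fun s s' => (tendsto_pi_nhds.1 ((tendsto_pi_nhds.1 hces) s)) s'
  -- the matrices Pstar, B, Z
  set Pstar : Matrix S S ℝ := Matrix.of fun _ s' : S => d s' with hPsdef
  set B : Matrix S S ℝ := 1 - P + Pstar with hBdef
  have hPPs : P * Pstar = Pstar := by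
    ext s s'
    rw [Matrix.mul_apply]
    show ∑ k, P s k * d s' = d s'
    rw [← Finset.sum_mul, hP1 s, one_mul]
  have hPsP : Pstar * P = Pstar := by
    ext s s'
    rw [Matrix.mul_apply]
    exact hdst s'
  have hPsPs : Pstar * Pstar = Pstar := by
    ext s s'
    rw [Matrix.mul_apply]
    show ∑ k, d k * d s' = d s'
    rw [← Finset.sum_mul, hd1, one_mul]
  have hPkPs : ∀ t : ℕ, P ^ t * Pstar = Pstar := by
    intro t
    induction t with
    | zero => rw [pow_zero, one_mul]
    | succ t ih => rw [pow_succ', mul_assoc, ih, hPPs]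
  have hBPs : B * Pstar = Pstar := by
    rw [hBdef, add_mul, sub_mul, one_mul, hPPs, hPsPs]
    abel
  have hPsB : Pstar * B = Pstar := by
    rw [hBdef, mul_add, mul_sub, mul_one, hPsP, hPsPs]
    abel
  -- d as a left fixed vector
  have hdP : ∀ y : S → ℝ, ∑ s, d s * ∑ k, P s k * y k = ∑ k, d k * y k := by
    intro y
    calc ∑ s, d s * ∑ k, P s k * y k
        = ∑ s, ∑ k, d s * P s k * y k := by
          refine Finset.sum_congr rfl fun s _ => ?_
          rw [Finset.mul_sum]
          exact Finset.sum_congr rfl fun k _ => by ring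
      _ = ∑ k, ∑ s, d s * P s k * y k := Finset.sum_comm
      _ = ∑ k, (∑ s, d s * P s k) * y k :=
          Finset.sum_congr rfl fun k _ => (Finset.sum_mul _ _ _).symm
      _ = ∑ k, d k * y k := Finset.sum_congr rfl fun k _ => by rw [hdst k]
  -- B is invertible
  have hker : ∀ x : S → ℝ, B *ᵥ x = 0 → x = 0 := by
    intro x hx
    have hpt : ∀ s, x s - (P *ᵥ x) s + (Pstar *ᵥ x) s = 0 := by
      intro s
      have h := congrFun hx s
      rw [hBdef, Matrix.add_mulVec, Matrix.sub_mulVec, Matrix.one_mulVec] at h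
      exact h
    have hPsx : ∀ s, (Pstar *ᵥ x) s = ∑ k, d k * x k := fun s => rfl
    have hc : (∑ k, d k * x k) = 0 := by
      have h0 : ∑ s, d s * (x s - (P *ᵥ x) s + (Pstar *ᵥ x) s) = 0 :=
        Finset.sum_eq_zero fun s _ => by rw [hpt s, mul_zero]
      have hexp : ∑ s, d s * (x s - (P *ᵥ x) s + (Pstar *ᵥ x) s)
          = ∑ s, d s * x s - ∑ s, d s * (P *ᵥ x) s + ∑ s, d s * (Pstar *ᵥ x) s := by
        simp [mul_add, mul_sub, Finset.sum_add_distrib, Finset.sum_sub_distrib]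
      have h1 : ∑ s, d s * (P *ᵥ x) s = ∑ k, d k * x k := hdP x
      have h2 : ∑ s, d s * (Pstar *ᵥ x) s = ∑ k, d k * x k := by
        calc ∑ s, d s * (Pstar *ᵥ x) s = ∑ s, d s * ∑ k, d k * x k :=
            Finset.sum_congr rfl fun s _ => by rw [hPsx s]
          _ = (∑ s, d s) * ∑ k, d k * x k := (Finset.sum_mul _ _ _).symm
          _ = ∑ k, d k * x k := by rw [hd1, one_mul]
      rw [hexp, h1, h2] at h0
      linarith
    have hxh : ∀ s, x s = ∑ k, P s k * x k := by
      intro s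
      have := hpt s
      rw [hPsx s, hc, add_zero] at this
      have hPx : (P *ᵥ x) s = ∑ k, P s k * x k := rfl
      linarith [this, hPx.symm.le]
    have := MDPaux.harmonic_eq_zero hC hxh hc
    funext s
    exact this s
  have hBinj : Function.Injective B.mulVec := by
    intro x y hxy
    have : B *ᵥ (x - y) = 0 := by
      rw [Matrix.mulVec_sub, hxy, sub_self]
    have := hker _ this
    rwa [sub_eq_zero] at this
  have hBunit : IsUnit B.det :=
    (Matrix.isUnit_iff_isUnit_det B).mp (Matrix.mulVec_injective_iff_isUnit.mp hBinj)
  set Z : Matrix S S ℝ := B⁻¹ with hZdef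
  have hBZ : B * Z = 1 := Matrix.mul_nonsing_inv B hBunit
  have hZB : Z * B = 1 := Matrix.nonsing_inv_mul B hBunit
  have hZPs : Z * Pstar = Pstar := by
    have h : Z * (B * Pstar) = Z * Pstar := by rw [hBPs]
    rw [← mul_assoc, hZB, one_mul] at h
    exact h.symm
  have hPsZ : Pstar * Z = Pstar := by
    have h : (Pstar * B) * Z = Pstar * Z := by rw [hPsB]
    rw [mul_assoc, hBZ, mul_one] at h
    exact h.symm
  have hBP : B - Pstar = 1 - P := by rw [hBdef]; abel
  have h1PZ : (1 - P) * Z = 1 - Pstar := by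
    calc (1 - P) * Z = (B - Pstar) * Z := by rw [hBP]
      _ = B * Z - Pstar * Z := sub_mul _ _ _
      _ = 1 - Pstar := by rw [hBZ, hPsZ]
  have hkey : (1 - P) * (Z - Pstar) = 1 - Pstar := by
    have h2 : (1 - P) * Pstar = 0 := by
      rw [sub_mul, one_mul, hPPs, sub_self]
    rw [mul_sub, h1PZ, h2, sub_zero]
  -- the bias vector
  set w : S → ℝ := Z *ᵥ r with hwdef
  set v : S → ℝ := (Z - Pstar) *ᵥ r with hvdef
  have hPsr : ∀ s, (Pstar *ᵥ r) s = rr := fun s => rfl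
  have hBell : ∀ s, v s = r s - rr + ∑ k, P s k * v k := by
    intro s
    have hveq : v - P *ᵥ v = r - Pstar *ᵥ r := by
      calc v - P *ᵥ v = (1 - P) *ᵥ v := by rw [Matrix.sub_mulVec, Matrix.one_mulVec]
        _ = ((1 - P) * (Z - Pstar)) *ᵥ r := by rw [hvdef, Matrix.mulVec_mulVec]
        _ = (1 - Pstar) *ᵥ r := by rw [hkey]
        _ = r - Pstar *ᵥ r := by rw [Matrix.sub_mulVec, Matrix.one_mulVec]
    have h := congrFun hveq s
    have e1 : (v - P *ᵥ v) s = v s - ∑ k, P s k * v k := rfl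
    have e2 : (r - Pstar *ᵥ r) s = r s - rr := by
      show r s - (Pstar *ᵥ r) s = r s - rr
      rw [hPsr s]
    rw [e1, e2] at h
    linarith
  -- centering
  have hdvZ : ∀ k, ∑ s, d s * Z s k = d k := by
    intro k
    have h := congrFun (Matrix.vecMul_vecMul d B Z) k
    have hdvB : d ᵥ* B = d := by
      funext j
      show ∑ s, d s * B s j = d j
      have hBapp : ∀ s, B s j = (1 : Matrix S S ℝ) s j - P s j + d j := by
        intro s
        rw [hBdef]
        simp [hPsdef, Matrix.add_apply, Matrix.sub_apply, Matrix.of_apply]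
      calc ∑ s, d s * B s j
          = ∑ s, (d s * (1 : Matrix S S ℝ) s j - d s * P s j + d s * d j) := by
            refine Finset.sum_congr rfl fun s _ => ?_
            rw [hBapp s]; ring
        _ = ∑ s, d s * (1 : Matrix S S ℝ) s j - ∑ s, d s * P s j + ∑ s, d s * d j := by
            rw [Finset.sum_add_distrib, Finset.sum_sub_distrib]
        _ = d j - d j + d j := by
            rw [hdst j]
            congr 1
            congr 1
            · simp [Matrix.one_apply, mul_ite, Finset.sum_ite_eq]
            · rw [← Finset.sum_mul, hd1, one_mul]
        _ = d j := by ring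
    rw [hdvB, hBZ, Matrix.vecMul_one] at h
    exact h
  have hcent : ∑ s, d s * v s = 0 := by
    calc ∑ s, d s * v s
        = ∑ s, d s * ((Z *ᵥ r) s - (Pstar *ᵥ r) s) := by
          refine Finset.sum_congr rfl fun s _ => ?_
          rw [hvdef, Matrix.sub_mulVec]
          rfl
      _ = ∑ s, d s * (Z *ᵥ r) s - ∑ s, d s * (Pstar *ᵥ r) s := by
          simp [mul_sub, Finset.sum_sub_distrib]
      _ = 0 := by
          have e1 : ∑ s, d s * (Z *ᵥ r) s = rr := by
            calc ∑ s, d s * (Z *ᵥ r) s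
                = ∑ s, d s * ∑ k, Z s k * r k := rfl
              _ = ∑ s, ∑ k, d s * Z s k * r k := by
                  refine Finset.sum_congr rfl fun s _ => ?_
                  rw [Finset.mul_sum]
                  exact Finset.sum_congr rfl fun k _ => by ring
              _ = ∑ k, ∑ s, d s * Z s k * r k := Finset.sum_comm
              _ = ∑ k, (∑ s, d s * Z s k) * r k :=
                  Finset.sum_congr rfl fun k _ => (Finset.sum_mul _ _ _).symm
              _ = ∑ k, d k * r k := Finset.sum_congr rfl fun k _ => by rw [hdvZ k]
              _ = rr := by rw [hrrdef]
          have e2 : ∑ s, d s * (Pstar *ᵥ r) s = rr := by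
            calc ∑ s, d s * (Pstar *ᵥ r) s = ∑ s, d s * rr :=
                Finset.sum_congr rfl fun s _ => by rw [hPsr s]
              _ = (∑ s, d s) * rr := (Finset.sum_mul _ _ _).symm
              _ = rr := by rw [hd1, one_mul]
          rw [e1, e2, sub_self]
  -- geometric-sum identity for partial sums of (P^t - Pstar)
  have hQ : ∀ t : ℕ, (P - Pstar) ^ (t + 1) = P ^ (t + 1) - Pstar := by
    intro t
    induction t with
    | zero => rw [pow_one, pow_one]
    | succ t ih =>
      rw [pow_succ, ih, sub_mul, mul_sub, mul_sub, hPkPs (t + 1), hPsP, hPsPs, ← pow_succ]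
      abel
  have hQsum : ∀ k : ℕ, ∑ t ∈ Finset.range (k + 1), (P ^ t - Pstar)
      = (∑ t ∈ Finset.range (k + 1), (P - Pstar) ^ t) - Pstar := by
    intro k
    induction k with
    | zero => simp
    | succ k ih =>
      rw [Finset.sum_range_succ, Finset.sum_range_succ (f := fun t => (P - Pstar) ^ t), ih,
        hQ k]
      abel
  have hB1Q : B = 1 - (P - Pstar) := by rw [hBdef]; abel
  have hgeom : ∀ k : ℕ, (∑ t ∈ Finset.range (k + 1), (P - Pstar) ^ t)
      = (1 - (P - Pstar) ^ (k + 1)) * Z := by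
    intro k
    have hg := geom_sum_mul (P - Pstar) (k + 1)
    have h2 : (∑ t ∈ Finset.range (k + 1), (P - Pstar) ^ t) * B
        = 1 - (P - Pstar) ^ (k + 1) := by
      rw [hB1Q, show (1 : Matrix S S ℝ) - (P - Pstar) = -((P - Pstar) - 1) from by abel,
        mul_neg, hg, neg_sub]
    calc (∑ t ∈ Finset.range (k + 1), (P - Pstar) ^ t)
        = (∑ t ∈ Finset.range (k + 1), (P - Pstar) ^ t) * (B * Z) := by rw [hBZ, mul_one]
      _ = ((∑ t ∈ Finset.range (k + 1), (P - Pstar) ^ t) * B) * Z := (mul_assoc _ _ _).symm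
      _ = (1 - (P - Pstar) ^ (k + 1)) * Z := by rw [h2]
  have hSk : ∀ k : ℕ, (∑ t ∈ Finset.range (k + 1), (P ^ t - Pstar))
      = (Z - Pstar) - (P ^ (k + 1) - Pstar) * Z := by
    intro k
    rw [hQsum k, hgeom k, hQ k, sub_mul, one_mul]
    abel
  -- scalar form of the partial-sum identity
  have hstep : ∀ (k : ℕ) (s : S), (∑ t ∈ Finset.range (k + 1), ((P ^ t *ᵥ r) s - rr))
      = v s - ((P ^ (k + 1) - Pstar) *ᵥ w) s := by
    intro k s
    have e1 : ∀ t : ℕ, (P ^ t *ᵥ r) s - rr = ((P ^ t - Pstar) *ᵥ r) s := by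
      intro t
      have h : ((P ^ t - Pstar) *ᵥ r) s = (P ^ t *ᵥ r) s - (Pstar *ᵥ r) s := by
        rw [Matrix.sub_mulVec]; rfl
      rw [h, hPsr s]
    rw [Finset.sum_congr rfl fun t _ => e1 t]
    have e2 : ∑ t ∈ Finset.range (k + 1), ((P ^ t - Pstar) *ᵥ r) s
        = ((∑ t ∈ Finset.range (k + 1), (P ^ t - Pstar)) *ᵥ r) s := by
      calc ∑ t ∈ Finset.range (k + 1), ((P ^ t - Pstar) *ᵥ r) s
          = ∑ t ∈ Finset.range (k + 1), ∑ j, (P ^ t - Pstar) s j * r j := rfl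
        _ = ∑ j, ∑ t ∈ Finset.range (k + 1), (P ^ t - Pstar) s j * r j := Finset.sum_comm
        _ = ∑ j, (∑ t ∈ Finset.range (k + 1), (P ^ t - Pstar) s j) * r j :=
            Finset.sum_congr rfl fun j _ => (Finset.sum_mul _ _ _).symm
        _ = ∑ j, ((∑ t ∈ Finset.range (k + 1), (P ^ t - Pstar)) s j) * r j := by
            refine Finset.sum_congr rfl fun j _ => ?_
            rw [Matrix.sum_apply]
    rw [e2, hSk k, Matrix.sub_mulVec]
    have e3 : (((P ^ (k + 1) - Pstar) * Z) *ᵥ r) = ((P ^ (k + 1) - Pstar) *ᵥ w) := by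
      rw [hwdef, Matrix.mulVec_mulVec]
    show ((Z - Pstar) *ᵥ r) s - (((P ^ (k + 1) - Pstar) * Z) *ᵥ r) s = _
    rw [e3, hvdef]
  -- shifted Cesàro averages also converge
  have hC' : ∀ s j, Tendsto (fun n : ℕ => (1 / (n:ℝ)) *
      ∑ k ∈ Finset.range n, (P ^ (k + 1)) s j) atTop (𝓝 (d j)) := by
    intro s j
    have hz : Tendsto (fun n : ℕ => (1 / (n:ℝ)) *
        ((P ^ n) s j - (1 : Matrix S S ℝ) s j)) atTop (𝓝 0) := by
      refine MDPaux.small_tendsto fun n => ?_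
      have h01 := MDPaux.pow_entry_nonneg hP0 n s j
      have h11 := MDPaux.pow_entry_le_one hP0 hP1 n s j
      rw [Matrix.one_apply]
      split_ifs <;> rw [abs_le] <;> constructor <;> linarith
    have h := (hC s j).add hz
    rw [add_zero] at h
    refine h.congr fun n => ?_
    rw [MDPaux.shift_sum P n s j]
    ring
  -- averaged one-sided constants converge
  have hconstav : ∀ c : ℝ, Tendsto (fun n : ℕ => (1 / (n:ℝ)) * ((n:ℝ) * c)) atTop (𝓝 c) := by
    intro c
    refine Tendsto.congr' ?_ (tendsto_const_nhds (x := c))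
    filter_upwards [eventually_ge_atTop 1] with n hn
    have hnz : ((n:ℕ):ℝ) ≠ 0 := by
      have : n ≠ 0 := by omega
      exact_mod_cast this
    field_simp
  -- the main limit
  have htendsto : ∀ s : S, Tendsto (fun n : ℕ =>
      (1 / (n : ℝ)) * ∑ k ∈ Finset.range n, ∑ t ∈ Finset.range (k + 1),
        ((P ^ t *ᵥ r) s - rr)) atTop (𝓝 (v s)) := by
    intro s
    have hgj : ∀ j, Tendsto (fun n : ℕ => ((1 / (n:ℝ)) *
        ∑ k ∈ Finset.range n, ((P ^ (k + 1)) s j - d j)) * w j) atTop (𝓝 0) := by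
      intro j
      have h1 : Tendsto (fun n : ℕ => (1 / (n:ℝ)) *
          ∑ k ∈ Finset.range n, ((P ^ (k + 1)) s j - d j)) atTop (𝓝 0) := by
        have h := (hC' s j).sub (hconstav (d j))
        rw [sub_self] at h
        refine h.congr fun n => ?_
        rw [Finset.sum_sub_distrib, Finset.sum_const, Finset.card_range, nsmul_eq_mul]
        ring
      have := h1.mul_const (w j)
      rwa [zero_mul] at this
    have h2 : Tendsto (fun n : ℕ => ∑ j, ((1 / (n:ℝ)) *
        ∑ k ∈ Finset.range n, ((P ^ (k + 1)) s j - d j)) * w j) atTop (𝓝 0) := by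
      have := tendsto_finset_sum (Finset.univ : Finset S) fun j _ => hgj j
      rwa [Finset.sum_const_zero] at this
    have h3 : Tendsto (fun n : ℕ => (1 / (n:ℝ)) * ((n:ℝ) * v s) - ∑ j, ((1 / (n:ℝ)) *
        ∑ k ∈ Finset.range n, ((P ^ (k + 1)) s j - d j)) * w j) atTop (𝓝 (v s)) := by
      have := (hconstav (v s)).sub h2
      rwa [sub_zero] at this
    refine h3.congr fun n => ?_
    -- identity:   (1/n)(n v s) - Σ_j (…) w j  =  (1/n) Σ_k Σ_t ((P^t r) s - rr)
    have hgk : ∀ k : ℕ, ((P ^ (k + 1) - Pstar) *ᵥ w) s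
        = ∑ j, ((P ^ (k + 1)) s j - d j) * w j := fun k => rfl
    calc (1 / (n:ℝ)) * ((n:ℝ) * v s) - ∑ j, ((1 / (n:ℝ)) *
          ∑ k ∈ Finset.range n, ((P ^ (k + 1)) s j - d j)) * w j
        = (1 / (n:ℝ)) * ((n:ℝ) * v s) - (1 / (n:ℝ)) *
            ∑ k ∈ Finset.range n, ∑ j, ((P ^ (k + 1)) s j - d j) * w j := by
          congr 1
          calc ∑ j, ((1 / (n:ℝ)) * ∑ k ∈ Finset.range n, ((P ^ (k + 1)) s j - d j)) * w j
              = ∑ j, (1 / (n:ℝ)) * ∑ k ∈ Finset.range n, ((P ^ (k + 1)) s j - d j) * w j := by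
                refine Finset.sum_congr rfl fun j _ => ?_
                rw [mul_assoc, Finset.sum_mul]
            _ = (1 / (n:ℝ)) * ∑ j, ∑ k ∈ Finset.range n, ((P ^ (k + 1)) s j - d j) * w j :=
                (Finset.mul_sum _ _ _).symm
            _ = (1 / (n:ℝ)) * ∑ k ∈ Finset.range n, ∑ j, ((P ^ (k + 1)) s j - d j) * w j := by
                rw [Finset.sum_comm]
      _ = (1 / (n:ℝ)) * ∑ k ∈ Finset.range n, (v s - ((P ^ (k + 1) - Pstar) *ᵥ w) s) := by
          rw [Finset.sum_sub_distrib, Finset.sum_const, Finset.card_range, nsmul_eq_mul,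
            mul_sub]
          congr 2
      _ = (1 / (n:ℝ)) * ∑ k ∈ Finset.range n, ∑ t ∈ Finset.range (k + 1),
            ((P ^ t *ᵥ r) s - rr) := by
          congr 1
          exact Finset.sum_congr rfl fun k _ => (hstep k s).symm
  -- identify the bias with v
  have hbias : M.bias π rr = v := by
    funext s
    exact (htendsto s).limUnder_eq
  -- translate Bellman equation to matrix form
  have hBellIff : ∀ (v' : S → ℝ) (rb : ℝ), M.BellmanEval π v' rb ↔
      ∀ s, v' s = r s - rb + ∑ k, P s k * v' k := by
    intro v' rb
    have key : ∀ s, (∑ a, π s a * ∑ s', ∑ ρ, M.p s a s' ρ * (M.rval ρ - rb + v' s'))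
        = r s - rb + ∑ k, P s k * v' k := by
      intro s
      have inner : ∀ a, (∑ s', ∑ ρ, M.p s a s' ρ * (M.rval ρ - rb + v' s'))
          = (∑ s', ∑ ρ, M.p s a s' ρ * M.rval ρ) - rb
            + ∑ s', (∑ ρ, M.p s a s' ρ) * v' s' := by
        intro a
        have hterm : ∀ s', ∑ ρ, M.p s a s' ρ * (M.rval ρ - rb + v' s')
            = (∑ ρ, M.p s a s' ρ * M.rval ρ) - (∑ ρ, M.p s a s' ρ) * rb
              + (∑ ρ, M.p s a s' ρ) * v' s' := by
          intro s'
          rw [Finset.sum_mul, Finset.sum_mul, ← Finset.sum_sub_distrib,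
            ← Finset.sum_add_distrib]
          exact Finset.sum_congr rfl fun ρ _ => by ring
        rw [Finset.sum_congr rfl fun s' _ => hterm s', Finset.sum_add_distrib,
          Finset.sum_sub_distrib]
        congr 2
        rw [← Finset.sum_mul, M.p_sum_one s a, one_mul]
      calc ∑ a, π s a * ∑ s', ∑ ρ, M.p s a s' ρ * (M.rval ρ - rb + v' s')
          = ∑ a, (π s a * (∑ s', ∑ ρ, M.p s a s' ρ * M.rval ρ) - π s a * rb
              + π s a * ∑ s', (∑ ρ, M.p s a s' ρ) * v' s') := by
            refine Finset.sum_congr rfl fun a _ => ?_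
            rw [inner a]; ring
        _ = (∑ a, π s a * ∑ s', ∑ ρ, M.p s a s' ρ * M.rval ρ) - (∑ a, π s a * rb)
              + ∑ a, π s a * ∑ s', (∑ ρ, M.p s a s' ρ) * v' s' := by
            rw [Finset.sum_add_distrib, Finset.sum_sub_distrib]
        _ = r s - rb + ∑ k, P s k * v' k := by
            congr 1
            · congr 1
              · show _ = M.rPi π s
                refine Finset.sum_congr rfl fun a _ => ?_
                rw [Finset.mul_sum]
                refine Finset.sum_congr rfl fun s' _ => ?_
                rw [Finset.mul_sum]
                exact Finset.sum_congr rfl fun ρ _ => by ring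
              · rw [← Finset.sum_mul, hπ1 s, one_mul]
            · calc ∑ a, π s a * ∑ s', (∑ ρ, M.p s a s' ρ) * v' s'
                  = ∑ a, ∑ s', π s a * ((∑ ρ, M.p s a s' ρ) * v' s') :=
                    Finset.sum_congr rfl fun a _ => Finset.mul_sum _ _ _
                _ = ∑ s', ∑ a, π s a * ((∑ ρ, M.p s a s' ρ) * v' s') := Finset.sum_comm
                _ = ∑ s', (∑ a, ∑ ρ, π s a * M.p s a s' ρ) * v' s' := by
                    refine Finset.sum_congr rfl fun s' _ => ?_
                    rw [Finset.sum_mul]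
                    refine Finset.sum_congr rfl fun a _ => ?_
                    rw [← mul_assoc, Finset.mul_sum, Finset.sum_mul]
                _ = ∑ k, P s k * v' k := rfl
    constructor
    · intro hb s
      rw [hb s, key s]
    · intro hb s
      rw [key s]
      exact hb s
  -- assemble everything
  rw [hbias]
  refine ⟨htendsto, ⟨(hBellIff v rr).mpr hBell, hcent⟩, ?_, ?_⟩
  · -- uniqueness
    intro v' rb hb hc'
    have hb' := (hBellIff v' rb).mp hb
    have hrb : rb = rr := by
      have h0 : ∑ s, d s * v' s = ∑ s, d s * (r s - rb + ∑ k, P s k * v' k) :=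
        Finset.sum_congr rfl fun s _ => by rw [← hb' s]
      have hexp : ∑ s, d s * (r s - rb + ∑ k, P s k * v' k)
          = ∑ s, d s * r s - ∑ s, d s * rb + ∑ s, d s * ∑ k, P s k * v' k := by
        simp [mul_add, mul_sub, Finset.sum_add_distrib, Finset.sum_sub_distrib]
      have h1 : ∑ s, d s * rb = rb := by rw [← Finset.sum_mul, hd1, one_mul]
      have h2 := hdP v'
      have h3 : ∑ s, d s * r s = rr := hrrdef.symm
      rw [hexp, h1, h2, h3, hc'] at h0
      linarith
    refine ⟨?_, hrb⟩
    have hx : ∀ s, (v' - v) s = ∑ k, P s k * (v' - v) k := by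
      intro s
      have h1 := hb' s
      rw [hrb] at h1
      have h2 := hBell s
      have h3 : ∑ k, P s k * (v' k - v k) = (∑ k, P s k * v' k) - ∑ k, P s k * v k := by
        simp [mul_sub, Finset.sum_sub_distrib]
      show v' s - v s = ∑ k, P s k * (v' k - v k)
      rw [h3]
      linarith
    have hdx : ∑ k, d k * (v' - v) k = 0 := by
      have : ∑ k, d k * (v' k - v k) = ∑ k, d k * v' k - ∑ k, d k * v k := by
        simp [mul_sub, Finset.sum_sub_distrib]
      show ∑ k, d k * (v' k - v k) = 0
      rw [this, hc', hcent, sub_self]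
    have hz := MDPaux.harmonic_eq_zero hC hx hdx
    funext s
    have := hz s
    have h4 : (v' - v) s = v' s - v s := rfl
    rw [h4] at this
    linarith
  · -- the constant-shift identity
    intro c v'' h
    have : ∑ s, d s * v'' s = ∑ s, (d s * v s + d s * c) :=
      Finset.sum_congr rfl fun s _ => by rw [h s]; ring
    rw [Finset.sum_add_distrib, hcent, ← Finset.sum_mul, hd1, one_mul, zero_add] at this
    exact this.symm
end

section
/- Let π be a stationary Markov policy on a finite MDP whose induced Markov chain is unichain, with reward rate r(π). Then: (i) r(π) is the unique scalar r̄ for which the evaluation Bellman equation v(s) = Σ_a π(a|s) Σ_{s',r} p(s',r|s,a)·(r − r̄ + v(s')) for all s admits a solution v ∈ ℝ^S; and (ii) for every η > 0 and every K ∈ ℝ there exists exactly one v ∈ ℝ^S satisfying this equation with r̄ = r(π) together with the normalization η·Σ_s v(s) = K. -/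
open Filter Topology Matrix

variable {S A R : Type*} [Fintype S] [Fintype A] [Fintype R] [DecidableEq S]

section AuxLemmas
variable {S' : Type*} [Fintype S'] [DecidableEq S']



private lemma abs_fixed {P : Matrix S S ℝ} (hP0 : ∀ s s', 0 ≤ P s s')
    (hP1 : ∀ s, ∑ s', P s s' = 1) {x : S → ℝ}
    (hx : ∀ s', ∑ s, x s * P s s' = x s') :
    ∀ s', ∑ s, |x s| * P s s' = |x s'| := by
  have hle : ∀ s', |x s'| ≤ ∑ s, |x s| * P s s' := by
    intro s'
    calc |x s'| = |∑ s, x s * P s s'| := by rw [hx]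
    _ ≤ ∑ s, |x s * P s s'| := Finset.abs_sum_le_sum_abs _ _
    _ = ∑ s, |x s| * P s s' := by
        refine Finset.sum_congr rfl fun s _ => ?_
        rw [abs_mul, abs_of_nonneg (hP0 s s')]
  have hsum : ∑ s', ∑ s, |x s| * P s s' = ∑ s', |x s'| := by
    rw [Finset.sum_comm]
    refine Finset.sum_congr rfl fun s _ => ?_
    rw [← Finset.mul_sum, hP1, mul_one]
  intro s'
  by_contra h
  have hlt : |x s'| < ∑ s, |x s| * P s s' := (hle s').lt_of_ne (Ne.symm h)
  have : ∑ t, |x t| < ∑ t', ∑ s, |x s| * P s t' :=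
    Finset.sum_lt_sum (fun i _ => hle i) ⟨s', Finset.mem_univ s', hlt⟩
  rw [hsum] at this
  exact lt_irrefl _ this

private lemma fixed_eq_smul {P : Matrix S S ℝ} (hP0 : ∀ s s', 0 ≤ P s s')
    (hP1 : ∀ s, ∑ s', P s s' = 1)
    {d : S → ℝ}
    (huniq : ∀ d' : S → ℝ, ((∀ s, 0 ≤ d' s) ∧ (∑ s, d' s = 1) ∧
      ∀ s', ∑ s, d' s * P s s' = d' s') → d' = d)
    {x : S → ℝ} (hx : ∀ s', ∑ s, x s * P s s' = x s') :
    x = (∑ s, x s) • d := by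
  have key : ∀ y : S → ℝ, (∀ s, 0 ≤ y s) → (∀ s', ∑ s, y s * P s s' = y s') →
      y = (∑ s, y s) • d := by
    intro y hy0 hyf
    rcases eq_or_lt_of_le (Finset.sum_nonneg fun s (_ : s ∈ Finset.univ) => hy0 s) with h0 | hpos
    · have hz : ∀ s, y s = 0 := fun s =>
        (Finset.sum_eq_zero_iff_of_nonneg (fun s _ => hy0 s)).mp h0.symm s (Finset.mem_univ s)
      funext s
      simp [hz s, Finset.sum_congr rfl fun s _ => hz s]
    · set t : ℝ := ∑ s, y s with ht
      have htne : t ≠ 0 := ne_of_gt hpos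
      have hd' := huniq (t⁻¹ • y) ⟨fun s => mul_nonneg (inv_nonneg.mpr hpos.le) (hy0 s),
        by simp only [Pi.smul_apply, smul_eq_mul, ← Finset.mul_sum, ← ht,
              inv_mul_cancel₀ htne],
        fun s' => by
          simp only [Pi.smul_apply, smul_eq_mul, mul_assoc, ← Finset.mul_sum, hyf s']⟩
      funext s
      have := congrFun hd' s
      simp only [Pi.smul_apply, smul_eq_mul] at this ⊢
      field_simp at this
      rw [this]
  have hxp : ∀ s', ∑ s, ((|x s| + x s)/2) * P s s' = (|x s'| + x s')/2 := by
    intro s'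
    simp only [div_mul_eq_mul_div, add_mul, ← Finset.sum_div, Finset.sum_add_distrib,
      abs_fixed hP0 hP1 hx s', hx s']
  have hxm : ∀ s', ∑ s, ((|x s| - x s)/2) * P s s' = (|x s'| - x s')/2 := by
    intro s'
    simp only [div_mul_eq_mul_div, sub_mul, ← Finset.sum_div, Finset.sum_sub_distrib,
      abs_fixed hP0 hP1 hx s', hx s']
  have h1 := key (fun s => (|x s| + x s)/2)
    (fun s => by have := abs_nonneg (x s); have := neg_abs_le (x s); linarith) hxp
  have h2 := key (fun s => (|x s| - x s)/2)
    (fun s => by have := le_abs_self (x s); linarith) hxm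
  have hsx : (∑ s, (|x s| + x s)/2) - (∑ s, (|x s| - x s)/2) = ∑ s, x s := by
    rw [← Finset.sum_sub_distrib]
    refine Finset.sum_congr rfl fun s _ => by ring
  funext s
  have e1 := congrFun h1 s
  have e2 := congrFun h2 s
  simp only [Pi.smul_apply, smul_eq_mul] at e1 e2 ⊢
  have : x s = (|x s| + x s)/2 - (|x s| - x s)/2 := by ring
  rw [this, e1, e2, ← sub_mul, hsx]






private lemma poisson {P : Matrix S S ℝ} (hP0 : ∀ s s', 0 ≤ P s s')
    (hP1 : ∀ s, ∑ s', P s s' = 1) {d : S → ℝ}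
    (hd1 : ∑ s, d s = 1) (hdf : ∀ s', ∑ s, d s * P s s' = d s')
    (huniq : ∀ d' : S → ℝ, ((∀ s, 0 ≤ d' s) ∧ (∑ s, d' s = 1) ∧
      ∀ s', ∑ s, d' s * P s s' = d' s') → d' = d)
    (rvec : S → ℝ) (horth : ∑ s, d s * rvec s = 0) :
    (∃ v : S → ℝ, ∀ s, v s = rvec s + ∑ s', P s s' * v s') ∧
    (∀ v w : S → ℝ, (∀ s, v s = rvec s + ∑ s', P s s' * v s') →
      (∀ s, w s = rvec s + ∑ s', P s s' * w s') → ∃ c : ℝ, w = fun s => v s + c) := by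
  classical
  have hne : Nonempty S := by
    rcases isEmpty_or_nonempty S with h | h
    · simp [Finset.univ_eq_empty] at hd1
    · exact h
  set n := Fintype.card S with hn
  set B : Matrix S S ℝ := 1 - P with hBdef
  have hBT : ∀ x : S → ℝ, Bᵀ *ᵥ x = fun s' => x s' - ∑ s, x s * P s s' := by
    intro x; funext s'
    simp only [hBdef, Matrix.mulVec, dotProduct, Matrix.transpose_apply,
      Matrix.sub_apply, Matrix.one_apply, sub_mul, Finset.sum_sub_distrib]
    congr 1
    · simp [Finset.sum_ite_eq]
    · exact Finset.sum_congr rfl fun s _ => mul_comm _ _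
  have hBv : ∀ v : S → ℝ, B *ᵥ v = fun s => v s - ∑ s', P s s' * v s' := by
    intro v; funext s
    simp only [hBdef, Matrix.mulVec, dotProduct, Matrix.sub_apply,
      Matrix.one_apply, sub_mul, Finset.sum_sub_distrib]
    congr 1
    simp [Finset.sum_ite_eq]
  have hdne : d ≠ 0 := by
    intro h; rw [h] at hd1; simp at hd1
  -- kernel of transpose
  have hkerT : LinearMap.ker (Bᵀ.mulVecLin) = Submodule.span ℝ {d} := by
    ext x
    rw [LinearMap.mem_ker, Matrix.mulVecLin_apply, Submodule.mem_span_singleton]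
    constructor
    · intro hx
      have hx' : ∀ s', ∑ s, x s * P s s' = x s' := by
        intro s'
        have := congrFun hx s'
        rw [hBT] at this
        simp at this
        linarith [this]
      exact ⟨∑ s, x s, (fixed_eq_smul hP0 hP1 huniq hx').symm⟩
    · rintro ⟨c, rfl⟩
      rw [hBT]
      funext s'
      simp only [Pi.smul_apply, smul_eq_mul, Pi.zero_apply]
      rw [show ∑ s, c * d s * P s s' = c * ∑ s, d s * P s s' by
        rw [Finset.mul_sum]; exact Finset.sum_congr rfl fun s _ => by ring, hdf]
      ring
  have hfin : Module.finrank ℝ (S → ℝ) = n := Module.finrank_pi ℝ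
  have hfkT : Module.finrank ℝ (LinearMap.ker (Bᵀ.mulVecLin)) = 1 := by
    rw [hkerT]; exact finrank_span_singleton hdne
  have hrnT := LinearMap.finrank_range_add_finrank_ker (Bᵀ.mulVecLin)
  have hrnB := LinearMap.finrank_range_add_finrank_ker (B.mulVecLin)
  rw [hfin] at hrnT hrnB
  have hranktr : Module.finrank ℝ (LinearMap.range (Bᵀ.mulVecLin))
      = Module.finrank ℝ (LinearMap.range (B.mulVecLin)) := by
    have := Matrix.rank_transpose B
    simpa [Matrix.rank] using this
  have hfkB : Module.finrank ℝ (LinearMap.ker (B.mulVecLin)) = 1 := by omega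
  -- ones vector
  set ones : S → ℝ := fun _ => (1 : ℝ) with hones
  have honesne : ones ≠ 0 := by
    intro h
    obtain ⟨s0⟩ := hne
    have := congrFun h s0
    simp [hones] at this
  have honesker : ones ∈ LinearMap.ker (B.mulVecLin) := by
    rw [LinearMap.mem_ker, Matrix.mulVecLin_apply, hBv]
    funext s; simp [hones, hP1 s]
  have hkerB : LinearMap.ker (B.mulVecLin) = Submodule.span ℝ {ones} := by
    refine (Submodule.eq_of_le_of_finrank_le ?_ ?_).symm
    · rw [Submodule.span_le, Set.singleton_subset_iff]; exact honesker
    · rw [hfkB, finrank_span_singleton honesne]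
  -- functional
  set φ : (S → ℝ) →ₗ[ℝ] ℝ :=
    { toFun := fun v => ∑ s, d s * v s,
      map_add' := by intros; simp [mul_add, Finset.sum_add_distrib],
      map_smul' := by
        intro c v
        simp only [Pi.smul_apply, smul_eq_mul, RingHom.id_apply, Finset.mul_sum]
        exact Finset.sum_congr rfl fun s _ => by ring } with hφ
  have hφsurj : Function.Surjective φ := by
    intro r
    refine ⟨fun _ => r, ?_⟩
    simp only [hφ, LinearMap.coe_mk, AddHom.coe_mk]
    rw [← Finset.sum_mul, hd1, one_mul]
  have hfrφ : Module.finrank ℝ (LinearMap.range φ) = 1 := by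
    rw [LinearMap.range_eq_top.mpr hφsurj]
    simp
  have hrnφ := LinearMap.finrank_range_add_finrank_ker φ
  rw [hfin, hfrφ] at hrnφ
  have hrangeB : LinearMap.range (B.mulVecLin) = LinearMap.ker φ := by
    refine Submodule.eq_of_le_of_finrank_le ?_ ?_
    · rintro y ⟨v, rfl⟩
      rw [LinearMap.mem_ker, Matrix.mulVecLin_apply, hBv]
      simp only [hφ, LinearMap.coe_mk, AddHom.coe_mk]
      have : ∑ s, d s * (v s - ∑ s', P s s' * v s')
          = ∑ s, d s * v s - ∑ s, ∑ s', d s * (P s s' * v s') := by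
        rw [← Finset.sum_sub_distrib]
        refine Finset.sum_congr rfl fun s _ => ?_
        rw [mul_sub, Finset.mul_sum]
      rw [this, Finset.sum_comm]
      have h2 : ∀ s', ∑ s, d s * (P s s' * v s') = (∑ s, d s * P s s') * v s' := by
        intro s'; rw [Finset.sum_mul]; exact Finset.sum_congr rfl fun s _ => by ring
      simp_rw [h2, hdf]
      simp
    · omega
  -- existence
  have hrmem : rvec ∈ LinearMap.range (B.mulVecLin) := by
    rw [hrangeB, LinearMap.mem_ker]
    simpa [hφ] using horth
  obtain ⟨v0, hv0⟩ := hrmem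
  constructor
  · refine ⟨v0, fun s => ?_⟩
    have := congrFun hv0 s
    rw [Matrix.mulVecLin_apply, hBv] at this
    simp only at this
    linarith
  · intro v w hv hw
    have hker : w - v ∈ LinearMap.ker (B.mulVecLin) := by
      rw [LinearMap.mem_ker, Matrix.mulVecLin_apply, hBv]
      funext s
      simp only [Pi.sub_apply, Pi.zero_apply]
      have h1 := hv s
      have h2 := hw s
      have h3 : ∑ s', P s s' * (w s' - v s') = ∑ s', P s s' * w s' - ∑ s', P s s' * v s' := by
        rw [← Finset.sum_sub_distrib]
        exact Finset.sum_congr rfl fun s' _ => by ring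
      rw [h3]; linarith
    rw [hkerB, Submodule.mem_span_singleton] at hker
    obtain ⟨c, hc⟩ := hker
    refine ⟨c, funext fun s => ?_⟩
    have := congrFun hc s
    simp only [Pi.smul_apply, smul_eq_mul, Pi.sub_apply, hones, mul_one] at this
    linarith


end AuxLemmas

/-- For a unichain policy `π` with reward rate `r(π)`: (i) `r(π)` is the
unique scalar `r̄` for which the evaluation Bellman equation admits a solution; (ii) for every
`η > 0` and `K ∈ ℝ` there is exactly one solution with `r̄ = r(π)` satisfying the
normalization `η · Σ_s v(s) = K`. -/
theorem bellman_evaluation_solution_structure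
    (M : MDP S A R) (π : S → A → ℝ) (hπ : IsPolicy π)
    (d : S → ℝ) (hd : M.IsStationaryDist π d)
    (hduniq : ∀ d', M.IsStationaryDist π d' → d' = d) :
    ((∃ v : S → ℝ, M.BellmanEval π v (∑ s : S, d s * M.rPi π s)) ∧
      ∀ rbar : ℝ, (∃ v : S → ℝ, M.BellmanEval π v rbar) →
        rbar = ∑ s : S, d s * M.rPi π s) ∧
    (∀ η K : ℝ, 0 < η →
      ∃! v : S → ℝ, M.BellmanEval π v (∑ s : S, d s * M.rPi π s) ∧
        η * ∑ s : S, v s = K) := by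
  classical
  obtain ⟨hπ0, hπ1⟩ := hπ
  obtain ⟨hd0, hd1, hdf⟩ := hd
  set P : Matrix S S ℝ := M.Pmat π with hPdef
  have hP0 : ∀ s s', 0 ≤ P s s' := fun s s' =>
    Finset.sum_nonneg fun a _ => Finset.sum_nonneg fun r _ =>
      mul_nonneg (hπ0 s a) (M.p_nonneg s a s' r)
  have hP1 : ∀ s, ∑ s', P s s' = 1 := by
    intro s
    simp only [hPdef, MDP.Pmat, Matrix.of_apply]
    rw [Finset.sum_comm]
    calc ∑ a, ∑ s', ∑ r, π s a * M.p s a s' r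
        = ∑ a, π s a * ∑ s', ∑ r, M.p s a s' r := by
          refine Finset.sum_congr rfl fun a _ => ?_
          rw [Finset.mul_sum]
          exact Finset.sum_congr rfl fun s' _ => by rw [Finset.mul_sum]
      _ = ∑ a, π s a := by
          refine Finset.sum_congr rfl fun a _ => ?_
          rw [M.p_sum_one s a, mul_one]
      _ = 1 := hπ1 s
  set rstar : ℝ := ∑ s, d s * M.rPi π s with hrstar
  have hsum : ∀ (v : S → ℝ) (rbar : ℝ) (s : S),
      (∑ a, π s a * ∑ s', ∑ r, M.p s a s' r * (M.rval r - rbar + v s'))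
      = M.rPi π s - rbar + ∑ s', P s s' * v s' := by
    intro v rbar s
    have expand : ∀ a, π s a * ∑ s', ∑ r, M.p s a s' r * (M.rval r - rbar + v s')
        = (π s a * ∑ s', ∑ r, M.p s a s' r * M.rval r)
          - π s a * rbar
          + π s a * ∑ s', (∑ r, M.p s a s' r) * v s' := by
      intro a
      have e1 : ∑ s', ∑ r, M.p s a s' r * (M.rval r - rbar + v s')
          = (∑ s', ∑ r, M.p s a s' r * M.rval r)
            - (∑ s', ∑ r, M.p s a s' r) * rbar
            + ∑ s', (∑ r, M.p s a s' r) * v s' := by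
        simp only [mul_sub, mul_add, Finset.sum_add_distrib, Finset.sum_sub_distrib,
          Finset.sum_mul]
      rw [e1, M.p_sum_one s a, one_mul, mul_add, mul_sub]
    rw [Finset.sum_congr rfl fun a _ => expand a]
    rw [Finset.sum_add_distrib, Finset.sum_sub_distrib]
    congr 1
    · congr 1
      · simp only [MDP.rPi]
        refine Finset.sum_congr rfl fun a _ => ?_
        rw [Finset.mul_sum]
        refine Finset.sum_congr rfl fun s' _ => ?_
        rw [Finset.mul_sum]
        exact Finset.sum_congr rfl fun r _ => by ring
      · rw [← Finset.sum_mul, hπ1 s, one_mul]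
    · calc ∑ a, π s a * ∑ s', (∑ r, M.p s a s' r) * v s'
          = ∑ a, ∑ s', π s a * ((∑ r, M.p s a s' r) * v s') := by
            exact Finset.sum_congr rfl fun a _ => Finset.mul_sum _ _ _
        _ = ∑ s', ∑ a, π s a * ((∑ r, M.p s a s' r) * v s') := Finset.sum_comm
        _ = ∑ s', P s s' * v s' := by
            refine Finset.sum_congr rfl fun s' _ => ?_
            simp only [hPdef, MDP.Pmat, Matrix.of_apply, Finset.sum_mul]
            refine Finset.sum_congr rfl fun a _ => ?_
            rw [Finset.mul_sum]
            exact Finset.sum_congr rfl fun r _ => by ring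
  have hBell : ∀ (v : S → ℝ) (rbar : ℝ), M.BellmanEval π v rbar ↔
      ∀ s, v s = M.rPi π s - rbar + ∑ s', P s s' * v s' := by
    intro v rbar
    exact forall_congr' fun s => by rw [hsum v rbar s]
  have huniq' : ∀ d' : S → ℝ, ((∀ s, 0 ≤ d' s) ∧ (∑ s, d' s = 1) ∧
      ∀ s', ∑ s, d' s * P s s' = d' s') → d' = d := fun d' h => hduniq d' h
  have horth : ∑ s, d s * (M.rPi π s - rstar) = 0 := by
    simp only [mul_sub]
    rw [Finset.sum_sub_distrib, ← hrstar, ← Finset.sum_mul, hd1, one_mul, sub_self]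
  have hpois := poisson hP0 hP1 hd1 hdf huniq' (fun s => M.rPi π s - rstar) horth
  -- sum against d of a Bellman solution
  have hdot : ∀ (v : S → ℝ) (rbar : ℝ),
      (∀ s, v s = M.rPi π s - rbar + ∑ s', P s s' * v s') → rbar = rstar := by
    intro v rbar hv
    have e : ∑ s, d s * v s
        = ∑ s, d s * (M.rPi π s - rbar) + ∑ s, d s * ∑ s', P s s' * v s' := by
      rw [← Finset.sum_add_distrib]
      refine Finset.sum_congr rfl fun s _ => ?_
      rw [← mul_add, ← hv s]
    have e2 : ∑ s, d s * ∑ s', P s s' * v s' = ∑ s, d s * v s := by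
      calc ∑ s, d s * ∑ s', P s s' * v s'
          = ∑ s, ∑ s', d s * P s s' * v s' := by
            refine Finset.sum_congr rfl fun s _ => ?_
            rw [Finset.mul_sum]
            exact Finset.sum_congr rfl fun s' _ => by ring
        _ = ∑ s', (∑ s, d s * P s s') * v s' := by
            rw [Finset.sum_comm]
            exact Finset.sum_congr rfl fun s' _ => (Finset.sum_mul _ _ _).symm
        _ = ∑ s', d s' * v s' := by
            exact Finset.sum_congr rfl fun s' _ => by rw [hdf s']
    have e3 : ∑ s, d s * (M.rPi π s - rbar) = rstar - rbar := by
      simp only [mul_sub]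
      rw [Finset.sum_sub_distrib, ← hrstar, ← Finset.sum_mul, hd1, one_mul]
    rw [e2, e3] at e
    linarith
  refine ⟨⟨?_, ?_⟩, ?_⟩
  · obtain ⟨v, hv⟩ := hpois.1
    exact ⟨v, (hBell v rstar).mpr hv⟩
  · rintro rbar ⟨v, hv⟩
    exact hdot v rbar ((hBell v rbar).mp hv)
  · intro η K hη
    have hne : Nonempty S := by
      rcases isEmpty_or_nonempty S with h | h
      · simp [Finset.univ_eq_empty] at hd1
      · exact h
    have hcard : (0 : ℝ) < (Fintype.card S : ℝ) := by
      exact_mod_cast Fintype.card_pos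
    obtain ⟨v0, hv0⟩ := hpois.1
    set c : ℝ := (K / η - ∑ s, v0 s) / (Fintype.card S : ℝ) with hc
    have hsumshift : ∀ b : ℝ, ∑ s, (v0 s + b) = (∑ s, v0 s) + (Fintype.card S : ℝ) * b := by
      intro b
      rw [Finset.sum_add_distrib, Finset.sum_const, Finset.card_univ, nsmul_eq_mul]
    have hbellshift : ∀ b : ℝ, M.BellmanEval π (fun s => v0 s + b) rstar := by
      intro b
      rw [hBell]
      intro s
      have h3 : ∑ s', P s s' * (v0 s' + b) = (∑ s', P s s' * v0 s') + b := by
        calc ∑ s', P s s' * (v0 s' + b) = ∑ s', (P s s' * v0 s' + P s s' * b) := by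
              exact Finset.sum_congr rfl fun s' _ => by ring
          _ = (∑ s', P s s' * v0 s') + (∑ s', P s s' * b) := Finset.sum_add_distrib
          _ = (∑ s', P s s' * v0 s') + b := by rw [← Finset.sum_mul, hP1 s, one_mul]
      rw [h3]
      have := hv0 s
      linarith
    refine ⟨fun s => v0 s + c, ⟨hbellshift c, ?_⟩, ?_⟩
    · rw [hsumshift c, hc]
      field_simp
      ring
    · rintro w ⟨hw, hwnorm⟩
      obtain ⟨c', hc'⟩ := hpois.2 (fun s => v0 s + c)
        w ((hBell _ rstar).mp (hbellshift c)) ((hBell w rstar).mp hw)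
      have hws : ∑ s, w s = (∑ s, v0 s) + (Fintype.card S : ℝ) * (c + c') := by
        rw [hc']
        calc ∑ s, (v0 s + c + c') = ∑ s, (v0 s + (c + c')) := by
              exact Finset.sum_congr rfl fun s _ => by ring
          _ = (∑ s, v0 s) + (Fintype.card S : ℝ) * (c + c') := hsumshift (c + c')
      have hvs : η * ((∑ s, v0 s) + (Fintype.card S : ℝ) * c) = K := by
        rw [hc]; field_simp; ring
      rw [hws] at hwnorm
      have hc0 : c' = 0 := by
        have hη' : η ≠ 0 := ne_of_gt hη
        have hcd : (Fintype.card S : ℝ) ≠ 0 := ne_of_gt hcard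
        have heq := mul_left_cancel₀ hη' (hwnorm.trans hvs.symm)
        have h2 : (Fintype.card S : ℝ) * c' = 0 := by linear_combination heq
        exact (mul_eq_zero.mp h2).resolve_left hcd
      rw [hc']
      funext s
      rw [hc0, add_zero]
end

section
/- Let π be a stationary Markov policy on a finite MDP whose induced Markov chain is unichain, with reward rate r(π), and let v ∈ ℝ^S satisfy the evaluation Bellman equation for π with r̄ = r(π). Then for every probability distribution d over S and every scalar R̄ ∈ ℝ, the d-weighted expected TD error satisfies Σ_s d(s) Σ_a π(a|s) Σ_{s',r} p(s',r|s,a)·(r − R̄ + v(s') − v(s)) = r(π) − R̄. In particular, this weighted expected TD error is zero if and only if R̄ = r(π), regardless of the state distribution d. -/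
open Filter Topology Matrix

variable {S A R : Type*} [Fintype S] [Fintype A] [Fintype R] [DecidableEq S]

/-- If `v` solves the evaluation Bellman equation for a unichain policy
`π` with `r̄ = r(π)`, then for every probability distribution `d'` over states and every
scalar `R̄`, the `d'`-weighted expected TD error equals `r(π) − R̄`; in particular it is zero
iff `R̄ = r(π)`, regardless of `d'`. -/
theorem weighted_expected_td_error_eq_reward_rate_gap
    (M : MDP S A R) (π : S → A → ℝ) (hπ : IsPolicy π)
    (d : S → ℝ) (hd : M.IsStationaryDist π d)
    (hduniq : ∀ d', M.IsStationaryDist π d' → d' = d)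
    (v : S → ℝ) (hv : M.BellmanEval π v (∑ s : S, d s * M.rPi π s)) :
    ∀ dist : S → ℝ, (∀ s, 0 ≤ dist s) → (∑ s : S, dist s = 1) →
    ∀ Rbar : ℝ,
      ((∑ s : S, dist s * ∑ a : A, π s a * ∑ s' : S, ∑ r : R,
          M.p s a s' r * (M.rval r - Rbar + v s' - v s))
        = (∑ s : S, d s * M.rPi π s) - Rbar) ∧
      ((∑ s : S, dist s * ∑ a : A, π s a * ∑ s' : S, ∑ r : R,
          M.p s a s' r * (M.rval r - Rbar + v s' - v s)) = 0 ↔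
        Rbar = ∑ s : S, d s * M.rPi π s) := by
  intro dist _ hdist1 Rbar
  set c : ℝ := ∑ s : S, d s * M.rPi π s with hc
  have key : ∀ s : S, (∑ a : A, π s a * ∑ s' : S, ∑ r : R,
      M.p s a s' r * (M.rval r - Rbar + v s' - v s)) = c - Rbar := by
    intro s
    have h1 : ∀ a : A, (∑ s' : S, ∑ r : R,
        M.p s a s' r * (M.rval r - Rbar + v s' - v s))
        = (∑ s' : S, ∑ r : R, M.p s a s' r * (M.rval r - c + v s'))
          + (c - Rbar - v s) := by
      intro a
      have : ∀ s' r, M.p s a s' r * (M.rval r - Rbar + v s' - v s)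
          = M.p s a s' r * (M.rval r - c + v s')
            + M.p s a s' r * (c - Rbar - v s) := by
        intro s' r; ring
      simp_rw [this, Finset.sum_add_distrib, ← Finset.sum_mul, M.p_sum_one s a,
        one_mul]
    calc (∑ a : A, π s a * ∑ s' : S, ∑ r : R,
        M.p s a s' r * (M.rval r - Rbar + v s' - v s))
        = (∑ a : A, π s a * ∑ s' : S, ∑ r : R,
            M.p s a s' r * (M.rval r - c + v s'))
          + (∑ a : A, π s a) * (c - Rbar - v s) := by
          simp_rw [h1, mul_add, Finset.sum_add_distrib, Finset.sum_mul]
      _ = v s + 1 * (c - Rbar - v s) := by rw [← hv s, hπ.2 s]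
      _ = c - Rbar := by ring
  constructor
  · simp_rw [key, ← Finset.sum_mul, hdist1, one_mul]
  · simp_rw [key, ← Finset.sum_mul, hdist1, one_mul, sub_eq_zero, eq_comm]
end
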